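/- arXiv:1409.7443 — 7 statements merged into one kernel-verified Lean document; each statement's English description precedes it below -/
import Mathlib

section
/- Suppose max_{1≤i≤n} |C_i| D_i ≤ c for some constant c ∈ (0,1). Let 𝟙 ∈ ℝⁿ be the row vector of ones, let r₀ ∈ ℝ, let Q ∈ ℝⁿ, and for k ≥ 0 define the row vectors R^{(n,k)} = r₀ 𝟙 Mᵏ + Σ_{i=0}^{k−1} Q Mⁱ and R^{(n,∞)} = Σ_{i=0}^∞ Q Mⁱ. Then for every k ≥ 0, ‖R^{(n,k)} − R^{(n,∞)}‖₁ ≤ |r₀| n cᵏ + ‖Q‖₁ cᵏ/(1−c). -/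
section aux
variable {n : ℕ} (M : Matrix (Fin n) (Fin n) ℝ) (c : ℝ)

lemma step (hrow : ∀ i, ∑ j, |M i j| ≤ c) (hc : 0 ≤ c) (x : Fin n → ℝ) :
    ∑ j, |Matrix.vecMul x M j| ≤ c * ∑ j, |x j| := by
  calc ∑ j, |Matrix.vecMul x M j| ≤ ∑ j, ∑ i, |x i * M i j| := by
        apply Finset.sum_le_sum
        intro j _
        simp only [Matrix.vecMul, dotProduct]
        exact Finset.abs_sum_le_sum_abs _ _
    _ = ∑ i, |x i| * ∑ j, |M i j| := by
        rw [Finset.sum_comm]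
        simp [abs_mul, Finset.mul_sum]
    _ ≤ ∑ i, |x i| * c := by
        apply Finset.sum_le_sum
        intro i _
        exact mul_le_mul_of_nonneg_left (hrow i) (abs_nonneg _)
    _ = c * ∑ i, |x i| := by rw [Finset.mul_sum]; simp [mul_comm]

lemma iter (hrow : ∀ i, ∑ j, |M i j| ≤ c) (hc : 0 ≤ c) (x : Fin n → ℝ) (k : ℕ) :
    ∑ j, |Matrix.vecMul x (M ^ k) j| ≤ c ^ k * ∑ j, |x j| := by
  induction k with
  | zero => simp [Matrix.vecMul_one]
  | succ m ih =>
      have : Matrix.vecMul x (M ^ (m+1)) = Matrix.vecMul (Matrix.vecMul x (M ^ m)) M := by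
        rw [pow_succ, Matrix.vecMul_vecMul]
      rw [this]
      calc ∑ j, |Matrix.vecMul (Matrix.vecMul x (M ^ m)) M j|
          ≤ c * ∑ j, |Matrix.vecMul x (M ^ m) j| := step M c hrow hc _
        _ ≤ c * (c ^ m * ∑ j, |x j|) := mul_le_mul_of_nonneg_left ih hc
        _ = c ^ (m+1) * ∑ j, |x j| := by ring
end aux

/-- With `max_i |C i| D i ≤ c`, `c ∈ (0,1)`, the finite iteration
`R^{(n,k)} = r₀ 𝟙 Mᵏ + ∑_{i<k} Q Mⁱ` and the limit `R^{(n,∞)} = ∑_{i} Q Mⁱ` satisfy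
`‖R^{(n,k)} − R^{(n,∞)}‖₁ ≤ |r₀| n cᵏ + ‖Q‖₁ cᵏ/(1−c)`. -/
theorem stmt_2 (n : ℕ) (hn : 0 < n) (D : Fin n → ℕ) (C : Fin n → ℝ)
    (s : Fin n → Fin n → ℕ) (hs : ∀ i, ∑ j, s i j = D i)
    (M : Matrix (Fin n) (Fin n) ℝ) (hM : ∀ i j, M i j = (s i j : ℝ) * C i)
    (c : ℝ) (hc0 : 0 < c) (hc1 : c < 1)
    (hCD : ∀ i, |C i| * (D i : ℝ) ≤ c)
    (r0 : ℝ) (Q : Fin n → ℝ) (k : ℕ) :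
    ∑ j, |(r0 • Matrix.vecMul (1 : Fin n → ℝ) (M ^ k)
            + ∑ i ∈ Finset.range k, Matrix.vecMul Q (M ^ i)) j
          - (∑' i : ℕ, Matrix.vecMul Q (M ^ i)) j|
      ≤ |r0| * n * c ^ k + (∑ j, |Q j|) * c ^ k / (1 - c) := by
  have hrow : ∀ i, ∑ j, |M i j| ≤ c := by
    intro i
    have : ∑ j, |M i j| = |C i| * (D i : ℝ) := by
      simp only [hM, abs_mul]
      rw [← hs i]
      push_cast
      rw [← Finset.sum_mul, mul_comm]
      congr 1
      exact Finset.sum_congr rfl fun j _ => abs_of_nonneg (by positivity)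
    rw [this]; exact hCD i
  have hiter := iter M c hrow hc0.le
  set S := ∑ j, |Q j| with hS
  have hSnn : 0 ≤ S := Finset.sum_nonneg fun j _ => abs_nonneg _
  -- coordinatewise summability
  have hcoord : ∀ (m : ℕ) (j : Fin n), ∀ x : Fin n → ℝ,
      |Matrix.vecMul x (M ^ m) j| ≤ c ^ m * ∑ j, |x j| := by
    intro m j x
    calc |Matrix.vecMul x (M ^ m) j| ≤ ∑ j', |Matrix.vecMul x (M ^ m) j'| :=
          Finset.single_le_sum (f := fun j' => |Matrix.vecMul x (M ^ m) j'|)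
            (fun j' _ => abs_nonneg _) (Finset.mem_univ j)
      _ ≤ c ^ m * ∑ j, |x j| := hiter x m
  have hsum : ∀ j : Fin n, Summable fun i : ℕ => Matrix.vecMul Q (M ^ i) j := by
    intro j
    apply Summable.of_abs
    apply Summable.of_nonneg_of_le (fun i => abs_nonneg _)
      (fun i => hcoord i j Q)
    exact (summable_geometric_of_lt_one hc0.le hc1).mul_right S
  have hsumPi : Summable fun i : ℕ => Matrix.vecMul Q (M ^ i) := by
    rw [Pi.summable]; exact hsum
  have htapp : ∀ j : Fin n, (∑' i : ℕ, Matrix.vecMul Q (M ^ i)) j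
      = ∑' i : ℕ, Matrix.vecMul Q (M ^ i) j := fun j => tsum_apply hsumPi
  -- split the tail
  have htail : ∀ j : Fin n,
      (∑ i ∈ Finset.range k, Matrix.vecMul Q (M ^ i) j)
        - ∑' i : ℕ, Matrix.vecMul Q (M ^ i) j
      = -∑' i : ℕ, Matrix.vecMul Q (M ^ (i + k)) j := by
    intro j
    have := (hsum j).sum_add_tsum_nat_add k
    linarith [this]
  have key : ∀ j : Fin n,
      |(r0 • Matrix.vecMul (1 : Fin n → ℝ) (M ^ k)
            + ∑ i ∈ Finset.range k, Matrix.vecMul Q (M ^ i)) j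
          - (∑' i : ℕ, Matrix.vecMul Q (M ^ i)) j|
      ≤ |r0| * |Matrix.vecMul (1 : Fin n → ℝ) (M ^ k) j|
        + ∑' i : ℕ, |Matrix.vecMul Q (M ^ (i + k)) j| := by
    intro j
    have e1 : (r0 • Matrix.vecMul (1 : Fin n → ℝ) (M ^ k)
            + ∑ i ∈ Finset.range k, Matrix.vecMul Q (M ^ i)) j
          - (∑' i : ℕ, Matrix.vecMul Q (M ^ i)) j
        = r0 * Matrix.vecMul (1 : Fin n → ℝ) (M ^ k) j
          + (-∑' i : ℕ, Matrix.vecMul Q (M ^ (i + k)) j) := by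
      rw [htapp j, ← htail j]
      simp [Finset.sum_apply]
      ring
    rw [e1]
    refine (abs_add_le _ _).trans ?_
    rw [abs_mul, abs_neg]
    gcongr
    have hsab : Summable fun i : ℕ => |Matrix.vecMul Q (M ^ (i + k)) j| := by
      apply Summable.of_nonneg_of_le (fun i => abs_nonneg _) (fun i => hcoord (i+k) j Q)
      exact (((summable_geometric_of_lt_one hc0.le hc1).mul_right S).comp_injective
        (add_left_injective k))
    simpa [Real.norm_eq_abs] using norm_tsum_le_tsum_norm (f := fun i : ℕ => Matrix.vecMul Q (M ^ (i + k)) j) (by simpa [Real.norm_eq_abs] using hsab)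
  have habs : ∀ j : Fin n, Summable fun i' : ℕ => |Matrix.vecMul Q (M ^ (i' + k)) j| := by
    intro j
    apply Summable.of_nonneg_of_le (fun m => abs_nonneg _) (fun m => hcoord (m+k) j Q)
    exact ((summable_geometric_of_lt_one hc0.le hc1).mul_right S).comp_injective
      (add_left_injective k)
  have hsumsums : Summable fun i : ℕ => ∑ j, |Matrix.vecMul Q (M ^ (i + k)) j| := by
    apply Summable.of_nonneg_of_le
      (fun i => Finset.sum_nonneg fun j _ => abs_nonneg _)
      (fun i => hiter Q (i + k))
    exact ((summable_geometric_of_lt_one hc0.le hc1).mul_right S).comp_injective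
      (add_left_injective k)
  calc ∑ j, |(r0 • Matrix.vecMul (1 : Fin n → ℝ) (M ^ k)
            + ∑ i ∈ Finset.range k, Matrix.vecMul Q (M ^ i)) j
          - (∑' i : ℕ, Matrix.vecMul Q (M ^ i)) j|
      ≤ ∑ j, (|r0| * |Matrix.vecMul (1 : Fin n → ℝ) (M ^ k) j|
        + ∑' i : ℕ, |Matrix.vecMul Q (M ^ (i + k)) j|) :=
        Finset.sum_le_sum fun j _ => key j
    _ = |r0| * ∑ j, |Matrix.vecMul (1 : Fin n → ℝ) (M ^ k) j|
        + ∑' i : ℕ, ∑ j, |Matrix.vecMul Q (M ^ (i + k)) j| := by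
        rw [Finset.sum_add_distrib, ← Finset.mul_sum,
          Summable.tsum_finsetSum (fun j _ => habs j)]
    _ ≤ |r0| * (c ^ k * ∑ j : Fin n, |(1 : Fin n → ℝ) j|)
        + ∑' i : ℕ, c ^ (i + k) * S := by
        gcongr |r0| * ?_ + ?_
        · exact hiter 1 k
        · exact Summable.tsum_le_tsum (fun i => hiter Q (i + k)) hsumsums
            (((summable_geometric_of_lt_one hc0.le hc1).mul_right S).comp_injective
              (add_left_injective k))
    _ = |r0| * n * c ^ k + S * c ^ k / (1 - c) := by
        have h1 : ∑ j : Fin n, |(1 : Fin n → ℝ) j| = (n : ℝ) := by simp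
        have h2 : ∑' i : ℕ, c ^ (i + k) * S = (1 - c)⁻¹ * (c ^ k * S) := by
          have : ∀ i : ℕ, c ^ (i + k) * S = c ^ i * (c ^ k * S) := by
            intro i; rw [pow_add]; ring
          simp only [this]
          rw [tsum_mul_right, tsum_geometric_of_lt_one hc0.le hc1]
        rw [h1, h2]
        field_simp
end

section
/- Let X₁, X₂, … be i.i.d. nonnegative random variables with E[X₁^{1+κ}] < ∞ for some κ > 0, and fix 0 < γ < 1. For each n ≥ 1 and each k ∈ {1, …, n}, let T_{n,k} denote the sum of the k largest values among X₁, …, X_n (equivalently, T_{n,k} = max over subsets A ⊆ {1,…,n} of cardinality k of Σ_{i∈A} X_i). Then there exists a constant C < ∞ (depending only on the distribution of X₁, κ, and γ) such that for all n ≥ 1 and all k ∈ {1,…,n}, P(T_{n,k} > n^{1−γ}) ≤ C · k^{κ/(1+κ)} · n^{−(κ/(1+κ) − γ)}. -/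
open MeasureTheory ProbabilityTheory

/-- For i.i.d. nonnegative `X_i` with `E[X₁^{1+κ}] < ∞` and `0 < γ < 1`,
there is a constant `C` such that for all `n ≥ 1` and `1 ≤ k ≤ n`, the probability that
the sum of the `k` largest among `X₁,…,X_n` (i.e. the maximal sum over `k`-element
subsets) exceeds `n^{1−γ}` is at most `C k^{κ/(1+κ)} n^{−(κ/(1+κ)−γ)}`. -/
theorem stmt_7 {Ω : Type*} [MeasureSpace Ω] [IsProbabilityMeasure (ℙ : Measure Ω)]
    (X : ℕ → Ω → ℝ) (hXmeas : ∀ i, Measurable (X i))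
    (hXnn : ∀ i, ∀ᵐ ω, 0 ≤ X i ω)
    (hiid : iIndepFun X ℙ)
    (hident : ∀ i, IdentDistrib (X i) (X 0) ℙ ℙ)
    (κ : ℝ) (hκ : 0 < κ)
    (hmom : Integrable (fun ω => X 0 ω ^ (1 + κ)))
    (γ : ℝ) (hγ0 : 0 < γ) (hγ1 : γ < 1) :
    ∃ C : ℝ, ∀ n : ℕ, 1 ≤ n → ∀ k : ℕ, 1 ≤ k → k ≤ n →
      ℙ {ω | ∃ A ∈ (Finset.range n).powersetCard k, (n : ℝ) ^ (1 - γ) < ∑ i ∈ A, X i ω}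
        ≤ ENNReal.ofReal
            (C * (k : ℝ) ^ (κ / (1 + κ)) * (n : ℝ) ^ (-(κ / (1 + κ) - γ))) := by
  have hκ1 : (0:ℝ) < 1 + κ := by linarith
  set M : ℝ := ∫ ω, X 0 ω ^ (1 + κ) with hMdef
  have hM0 : 0 ≤ M := by
    refine integral_nonneg_of_ae ?_
    filter_upwards [hXnn 0] with ω h
    exact Real.rpow_nonneg h _
  set C₀ : ℝ := 2 ^ (1 + κ) * (M + 1) with hC₀def
  have hC₀pos : 0 < C₀ := by positivity
  refine ⟨C₀ ^ (1 / (1 + κ)), ?_⟩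
  intro n hn k hk hkn
  set θ : ℝ := 1 / (1 + κ) with hθdef
  have hnpos : (0:ℝ) < n := by exact_mod_cast hn
  have hkpos : (0:ℝ) < k := by exact_mod_cast hk
  set t : ℝ := (n : ℝ) ^ (1 - γ) with htdef
  have htpos : 0 < t := Real.rpow_pos_of_pos hnpos _
  set u : ℝ := t / (2 * k) with hudef
  have hupos : 0 < u := by positivity
  set f : ℝ → ℝ := fun x => if u < x then x else 0 with hfdef
  have hfmeas : Measurable f :=
    Measurable.ite (measurableSet_lt measurable_const measurable_id) measurable_id
      measurable_const
  have hfnn : ∀ x, 0 ≤ f x := by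
    intro x; simp only [hfdef]; split <;> [linarith [hupos]; rfl]
  have hfle : ∀ x : ℝ, 0 ≤ x → f x ≤ x ^ (1 + κ) / u ^ κ := by
    intro x hx
    simp only [hfdef]
    split
    · rename_i h
      rw [le_div_iff₀ (Real.rpow_pos_of_pos hupos κ)]
      calc x * u ^ κ ≤ x * x ^ κ := by
            exact mul_le_mul_of_nonneg_left
              (Real.rpow_le_rpow hupos.le h.le hκ.le) hx
        _ = x ^ (1:ℝ) * x ^ κ := by rw [Real.rpow_one]
        _ = x ^ (1 + κ) := (Real.rpow_add' hx (by linarith)).symm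
    · positivity
  -- integrability of f ∘ X 0
  have hg_int : Integrable (fun ω => f (X 0 ω)) := by
    refine Integrable.mono (hmom.div_const (u ^ κ))
      ((hfmeas.comp (hXmeas 0)).aestronglyMeasurable) ?_
    filter_upwards [hXnn 0] with ω h
    rw [Real.norm_of_nonneg (hfnn _)]
    exact (hfle _ h).trans (le_abs_self _)
  have hgi_int : ∀ i, Integrable (fun ω => f (X i ω)) := by
    intro i
    exact ((hident i).comp hfmeas).integrable_iff.mpr hg_int
  set S : Ω → ℝ := fun ω => ∑ i ∈ Finset.range n, f (X i ω) with hSdef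
  have hS_int : Integrable S := integrable_finset_sum _ fun i _ => hgi_int i
  have hS_nn : ∀ ω, 0 ≤ S ω := fun ω => Finset.sum_nonneg fun i _ => hfnn _
  -- integral of S
  have hg_le : ∫ ω, f (X 0 ω) ≤ M / u ^ κ := by
    rw [hMdef, ← integral_div]
    refine integral_mono_ae hg_int (hmom.div_const _) ?_
    filter_upwards [hXnn 0] with ω h
    exact hfle _ h
  have hSint_le : ∫ ω, S ω ≤ n * (M / u ^ κ) := by
    rw [hSdef]
    simp only
    rw [integral_finset_sum _ fun i _ => hgi_int i]
    calc ∑ i ∈ Finset.range n, ∫ ω, f (X i ω)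
        = ∑ i ∈ Finset.range n, ∫ ω, f (X 0 ω) := by
          refine Finset.sum_congr rfl fun i _ => ?_
          exact ((hident i).comp hfmeas).integral_eq
      _ = n * ∫ ω, f (X 0 ω) := by
          rw [Finset.sum_const, Finset.card_range, nsmul_eq_mul]
      _ ≤ n * (M / u ^ κ) := by
          exact mul_le_mul_of_nonneg_left hg_le hnpos.le
  -- event inclusion
  have hsub : ℙ {ω | ∃ A ∈ (Finset.range n).powersetCard k, t < ∑ i ∈ A, X i ω}
      ≤ ℙ {ω | t / 2 ≤ S ω} := by
    refine measure_mono_ae ?_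
    have hall : ∀ᵐ ω, ∀ i, 0 ≤ X i ω := ae_all_iff.mpr hXnn
    filter_upwards [hall] with ω hω
    rintro ⟨A, hA, hAsum⟩
    rw [Finset.mem_powersetCard] at hA
    obtain ⟨hAsub, hAcard⟩ := hA
    have h1 : ∑ i ∈ A, X i ω ≤ k * u + S ω := by
      calc ∑ i ∈ A, X i ω ≤ ∑ i ∈ A, (u + f (X i ω)) := by
            refine Finset.sum_le_sum fun i _ => ?_
            by_cases h : u < X i ω
            · simp only [hfdef, if_pos h]; linarith [hupos]
            · simp only [hfdef, if_neg h]; push_neg at h; linarith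
        _ = A.card * u + ∑ i ∈ A, f (X i ω) := by
            rw [Finset.sum_add_distrib, Finset.sum_const, nsmul_eq_mul]
        _ ≤ k * u + S ω := by
            rw [hAcard]
            refine add_le_add le_rfl ?_
            exact Finset.sum_le_sum_of_subset_of_nonneg hAsub fun i _ _ => hfnn _
    have hku : (k:ℝ) * u = t / 2 := by
      rw [hudef]; field_simp
    rw [hku] at h1
    show t / 2 ≤ S ω
    linarith
  -- Markov's inequality
  have hmarkov : ℙ {ω | t / 2 ≤ S ω} ≤ ENNReal.ofReal ((n * (M / u ^ κ)) / (t / 2)) := by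
    have h := mul_meas_ge_le_integral_of_nonneg (ae_of_all _ hS_nn) hS_int (t / 2)
    have h2 : (ℙ {ω | t / 2 ≤ S ω}).toReal ≤ (n * (M / u ^ κ)) / (t / 2) := by
      rw [le_div_iff₀ (by linarith)]
      calc (ℙ {ω | t / 2 ≤ S ω}).toReal * (t / 2)
          = (t / 2) * (ℙ {ω | t / 2 ≤ S ω}).toReal := mul_comm _ _
        _ ≤ ∫ ω, S ω := h
        _ ≤ n * (M / u ^ κ) := hSint_le
    calc ℙ {ω | t / 2 ≤ S ω} = ENNReal.ofReal (ℙ {ω | t / 2 ≤ S ω}).toReal :=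
          (ENNReal.ofReal_toReal (measure_ne_top _ _)).symm
      _ ≤ _ := ENNReal.ofReal_le_ofReal h2
  -- algebraic simplification of the bound
  set e : ℝ := 1 - (1 - γ) * (1 + κ) with hedef
  set B' : ℝ := C₀ * (k:ℝ) ^ κ * (n:ℝ) ^ e with hB'def
  have hB'pos : 0 < B' := by
    rw [hB'def, hC₀def]
    positivity
  have hnt : (n:ℝ) / t ^ (1 + κ) = (n:ℝ) ^ e := by
    rw [hedef, Real.rpow_sub hnpos, Real.rpow_one, htdef, ← Real.rpow_mul hnpos.le]
  have hu_rpow : u ^ κ = t ^ κ / (2 * k) ^ κ := Real.div_rpow htpos.le (by positivity) κ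
  have h2k : ((2:ℝ) * k) ^ κ = 2 ^ κ * (k:ℝ) ^ κ := Real.mul_rpow (by norm_num) hkpos.le
  have ht1κ : t ^ (1 + κ) = t * t ^ κ := by
    rw [Real.rpow_add htpos, Real.rpow_one]
  have h21κ : (2:ℝ) ^ (1 + κ) = 2 * 2 ^ κ := by
    rw [Real.rpow_add (by norm_num), Real.rpow_one]
  have keyeq : (n:ℝ) * ((M + 1) / u ^ κ) / (t / 2) = B' := by
    rw [hB'def, ← hnt, hu_rpow, h2k, hC₀def, h21κ, ht1κ]
    have h1 : t ^ κ ≠ 0 := (Real.rpow_pos_of_pos htpos κ).ne'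
    field_simp
  have hBle : (n:ℝ) * (M / u ^ κ) / (t / 2) ≤ B' := by
    rw [← keyeq]
    gcongr
    linarith
  have hPB : ℙ {ω | ∃ A ∈ (Finset.range n).powersetCard k, t < ∑ i ∈ A, X i ω}
      ≤ ENNReal.ofReal B' :=
    hsub.trans (hmarkov.trans (ENNReal.ofReal_le_ofReal hBle))
  have hfinal : B' ^ θ = C₀ ^ θ * (k:ℝ) ^ (κ / (1 + κ)) * (n:ℝ) ^ (-(κ / (1 + κ) - γ)) := by
    rw [hB'def, Real.mul_rpow (by positivity) (Real.rpow_nonneg hnpos.le _),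
      Real.mul_rpow (by rw [hC₀def]; positivity) (Real.rpow_nonneg hkpos.le _),
      ← Real.rpow_mul hkpos.le, ← Real.rpow_mul hnpos.le]
    congr 2
    · rw [hθdef]; field_simp
    · rw [hθdef, hedef]; field_simp; ring
  rw [← hfinal]
  rcases le_total B' 1 with h | h
  · refine hPB.trans (ENNReal.ofReal_le_ofReal ?_)
    calc B' = B' ^ (1:ℝ) := (Real.rpow_one B').symm
      _ ≤ B' ^ θ := Real.rpow_le_rpow_of_exponent_ge hB'pos h
          (by rw [hθdef]; rw [div_le_one hκ1]; linarith)
  · have h1 : (1:ℝ) ≤ B' ^ θ := Real.one_le_rpow h (by positivity)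
    calc ℙ {ω | ∃ A ∈ (Finset.range n).powersetCard k, t < ∑ i ∈ A, X i ω} ≤ 1 :=
          prob_le_one
      _ = ENNReal.ofReal 1 := ENNReal.ofReal_one.symm
      _ ≤ ENNReal.ofReal (B' ^ θ) := ENNReal.ofReal_le_ofReal h1
end

section
/- Let X₁, X₂, … be i.i.d. real random variables with E[|X₁|^{1+κ}] < ∞ for some κ > 0, set μ = E[X₁], S_m = X₁ + ⋯ + X_m, and θ = min{1+κ, 2}. Fix K > 0, a nonnegative sequence {x_n} with x_n → ∞, and a sequence of positive integers {m_n} with m_n / x_n^{1+κ} → 0 as n → ∞. Then there exists n₀ ≥ 1 such that for all n ≥ n₀, P(|S_{m_n} − m_n μ| > K x_n) ≤ E[|X₁|^θ] (2/K² + 1) m_n / x_n^θ. -/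
open MeasureTheory ProbabilityTheory Filter

set_option maxHeartbeats 1000000 in
/-- explicit weak law of large numbers. For i.i.d. `X_i` with
`E[|X₁|^{1+κ}] < ∞`, `μ = E[X₁]`, `θ = min(1+κ,2)`, any `K > 0`, any nonnegative
`x_n → ∞` and positive integers `m_n = o(x_n^{1+κ})`, eventually in `n`:
`P(|S_{m_n} − m_n μ| > K x_n) ≤ E[|X₁|^θ](2/K² + 1) m_n / x_n^θ`. -/
theorem stmt_8 {Ω : Type*} [MeasureSpace Ω] [IsProbabilityMeasure (ℙ : Measure Ω)]
    (X : ℕ → Ω → ℝ) (hXmeas : ∀ i, Measurable (X i))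
    (hiid : iIndepFun X ℙ)
    (hident : ∀ i, IdentDistrib (X i) (X 0) ℙ ℙ)
    (κ : ℝ) (hκ : 0 < κ)
    (hmom : Integrable (fun ω => |X 0 ω| ^ (1 + κ)))
    (μ θ : ℝ) (hμ : μ = ∫ ω, X 0 ω) (hθ : θ = min (1 + κ) 2)
    (K : ℝ) (hK : 0 < K)
    (x : ℕ → ℝ) (hxnn : ∀ n, 0 ≤ x n) (hx : Tendsto x atTop atTop)
    (m : ℕ → ℕ) (hmpos : ∀ n, 0 < m n)
    (hmx : Tendsto (fun n => (m n : ℝ) / x n ^ (1 + κ)) atTop (nhds 0)) :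
    ∃ n0 : ℕ, ∀ n ≥ n0,
      ℙ {ω | K * x n < |(∑ i ∈ Finset.range (m n), X i ω) - (m n : ℝ) * μ|}
        ≤ ENNReal.ofReal
            ((∫ ω, |X 0 ω| ^ θ) * (2 / K ^ 2 + 1) * (m n : ℝ) / x n ^ θ) := by
  -- basic facts about θ
  have hθ1 : 1 < θ := by rw [hθ]; exact lt_min (by linarith) one_lt_two
  have hθ0 : 0 < θ := by linarith
  have hθ2 : θ ≤ 2 := by rw [hθ]; exact min_le_right _ _
  have hθκ : θ ≤ 1 + κ := by rw [hθ]; exact min_le_left _ _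
  have hX0m : Measurable (X 0) := hXmeas 0
  -- integrability of powers of |X 0|
  have hptwise : ∀ (p : ℝ), 0 ≤ p → p ≤ 1 + κ → ∀ ω,
      |X 0 ω| ^ p ≤ 1 + |X 0 ω| ^ (1 + κ) := by
    intro p hp0 hp ω
    rcases le_or_gt (|X 0 ω|) 1 with h | h
    · have h1 : |X 0 ω| ^ p ≤ 1 := Real.rpow_le_one (abs_nonneg _) h hp0
      have h2 : (0:ℝ) ≤ |X 0 ω| ^ (1 + κ) := Real.rpow_nonneg (abs_nonneg _) _
      linarith
    · have h1 : |X 0 ω| ^ p ≤ |X 0 ω| ^ (1 + κ) :=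
        Real.rpow_le_rpow_of_exponent_le h.le hp
      linarith
  have hint_pow : ∀ (p : ℝ), 0 ≤ p → p ≤ 1 + κ →
      Integrable (fun ω => |X 0 ω| ^ p) := by
    intro p hp0 hp
    refine Integrable.mono' ((integrable_const (1:ℝ)).add hmom)
      (Measurable.aestronglyMeasurable (by measurability)) ?_
    filter_upwards with ω
    rw [Real.norm_eq_abs, abs_of_nonneg (Real.rpow_nonneg (abs_nonneg _) _)]
    exact hptwise p hp0 hp ω
  have hintθ : Integrable (fun ω => |X 0 ω| ^ θ) := hint_pow θ hθ0.le hθκ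
  have hX0int : Integrable (X 0) := by
    have h1 : Integrable (fun ω => |X 0 ω| ^ (1:ℝ)) := hint_pow 1 zero_le_one (by linarith)
    have h2 : Integrable (fun ω => |X 0 ω|) := by
      simpa [Real.rpow_one] using h1
    exact h2.abs.congr (Filter.Eventually.of_forall fun ω => abs_abs _) |>.mono'
      hX0m.aestronglyMeasurable
      (Filter.Eventually.of_forall fun ω => by simp [Real.norm_eq_abs, abs_abs])
  set Cθ := ∫ ω, |X 0 ω| ^ θ with hCθdef
  set C1 := ∫ ω, |X 0 ω| ^ (1 + κ) with hC1def
  have hCθ0 : 0 ≤ Cθ := integral_nonneg fun ω => Real.rpow_nonneg (abs_nonneg _) _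
  have hC10 : 0 ≤ C1 := integral_nonneg fun ω => Real.rpow_nonneg (abs_nonneg _) _
  -- the constant δ for the centering
  have hs2 : 1 < Real.sqrt 2 := by
    nlinarith [Real.sq_sqrt (by norm_num : (2:ℝ) ≥ 0), Real.sqrt_nonneg 2]
  set δ := K - K / Real.sqrt 2 with hδdef
  have hδ0 : 0 < δ := by
    have : K / Real.sqrt 2 < K := div_lt_self hK hs2
    simp only [hδdef]; linarith
  set ε := δ / (C1 + 1) with hεdef
  have hε0 : 0 < ε := div_pos hδ0 (by linarith)
  obtain ⟨n0, hn0⟩ := (eventually_atTop).mp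
    ((hx.eventually_ge_atTop 1).and (hmx.eventually (eventually_lt_nhds hε0)))
  refine ⟨n0, fun n hn => ?_⟩
  obtain ⟨hx1, hsm⟩ := hn0 n hn
  set A := x n with hAdef
  have hA0 : (0:ℝ) < A := lt_of_lt_of_le one_pos hx1
  set M := m n with hMdef
  have hM0 : (0:ℝ) < (M:ℝ) := by exact_mod_cast hmpos n
  have hxθ0 : (0:ℝ) < A ^ θ := Real.rpow_pos_of_pos hA0 θ
  have hx1κ0 : (0:ℝ) < A ^ (1 + κ) := Real.rpow_pos_of_pos hA0 _
  have hxκ0 : (0:ℝ) < A ^ κ := Real.rpow_pos_of_pos hA0 _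
  have hx2θ0 : (0:ℝ) < A ^ (2 - θ) := Real.rpow_pos_of_pos hA0 _
  -- the truncated variables
  have hg : Measurable (Set.indicator (Set.Ioc (-A) A) (id : ℝ → ℝ)) :=
    measurable_id.indicator measurableSet_Ioc
  set Y : ℕ → Ω → ℝ := fun i => truncation (X i) A with hYdef
  have hYmeas : ∀ i, Measurable (Y i) := fun i => hg.comp (hXmeas i)
  have hYid : ∀ i, IdentDistrib (Y i) (Y 0) ℙ ℙ := fun i => (hident i).comp hg
  have hYmem : ∀ i, MemLp (Y i) 2 ℙ := fun i =>
    (hXmeas i).aestronglyMeasurable.memLp_truncation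
  have hYint : ∀ i, Integrable (Y i) := fun i =>
    (hXmeas i).aestronglyMeasurable.integrable_truncation
  have hYindep : iIndepFun Y ℙ :=
    hiid.comp (fun _ => Set.indicator (Set.Ioc (-A) A) id) (fun _ => hg)
  set F : Ω → ℝ := ∑ i ∈ Finset.range M, Y i with hFdef
  have hFapply : ∀ ω, F ω = ∑ i ∈ Finset.range M, Y i ω := by
    intro ω; simp [hFdef]
  -- expectation of F
  have hEY : ∀ i, ∫ ω, Y i ω = ∫ ω, Y 0 ω := fun i => (hYid i).integral_eq
  have hEF : ∫ ω, F ω = (M:ℝ) * ∫ ω, Y 0 ω := by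
    have : ∫ ω, F ω = ∑ i ∈ Finset.range M, ∫ ω, Y i ω := by
      simp only [hFapply]
      exact integral_finset_sum _ fun i _ => hYint i
    rw [this]
    rw [Finset.sum_congr rfl fun i _ => hEY i, Finset.sum_const, Finset.card_range,
      nsmul_eq_mul]
  -- centering estimate
  have hcent : |(M:ℝ) * μ - ∫ ω, F ω| ≤ δ * A := by
    rw [hEF, ← mul_sub, abs_mul, Nat.abs_cast]
    have hdiff : |μ - ∫ ω, Y 0 ω| ≤ C1 / A ^ κ := by
      have hsub : μ - ∫ ω, Y 0 ω = ∫ ω, (X 0 ω - Y 0 ω) := by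
        rw [hμ, integral_sub hX0int (hYint 0)]
      rw [hsub]
      have hbound : ∀ ω, |X 0 ω - Y 0 ω| ≤ |X 0 ω| ^ (1 + κ) / A ^ κ := by
        intro ω
        by_cases h : X 0 ω ∈ Set.Ioc (-A) A
        · have : Y 0 ω = X 0 ω := by
            simp only [hYdef, truncation, Function.comp_apply, Set.indicator_of_mem h, id]
          rw [this, sub_self, abs_zero]
          positivity
        · have hY0 : Y 0 ω = 0 := by
            simp only [hYdef, truncation, Function.comp_apply, Set.indicator_of_notMem h]
          have hA_le : A ≤ |X 0 ω| := by
            simp only [Set.mem_Ioc, not_and_or, not_lt, not_le] at h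
            rcases h with h | h
            · have : X 0 ω ≤ 0 := le_trans h (by linarith)
              rw [abs_of_nonpos this]; linarith
            · exact le_trans h.le (le_abs_self _)
          rw [hY0, sub_zero, le_div_iff₀ hxκ0]
          calc |X 0 ω| * A ^ κ ≤ |X 0 ω| * |X 0 ω| ^ κ :=
                mul_le_mul_of_nonneg_left
                  (Real.rpow_le_rpow hA0.le hA_le hκ.le) (abs_nonneg _)
            _ = |X 0 ω| ^ (1 + κ) := by
                rw [Real.rpow_add' (abs_nonneg _) (by positivity), Real.rpow_one]
      calc |∫ ω, (X 0 ω - Y 0 ω)| ≤ ∫ ω, |X 0 ω - Y 0 ω| := by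
            simpa [Real.norm_eq_abs] using
              norm_integral_le_integral_norm (fun ω => X 0 ω - Y 0 ω)
        _ ≤ ∫ ω, |X 0 ω| ^ (1 + κ) / A ^ κ := by
            refine integral_mono ((hX0int.sub (hYint 0)).abs) (hmom.div_const _) ?_
            intro ω; exact hbound ω
        _ = C1 / A ^ κ := by rw [integral_div]
    calc (M:ℝ) * |μ - ∫ ω, Y 0 ω| ≤ (M:ℝ) * (C1 / A ^ κ) :=
          mul_le_mul_of_nonneg_left hdiff (Nat.cast_nonneg _)
      _ ≤ δ * A := by
          rw [mul_div_assoc', div_le_iff₀ hxκ0]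
          have hAsplit : A * A ^ κ = A ^ (1 + κ) := by
            rw [Real.rpow_add' hA0.le (by positivity), Real.rpow_one]
          have hM_lt : (M:ℝ) < ε * A ^ (1 + κ) := by
            rw [div_lt_iff₀ hx1κ0] at hsm
            exact hsm
          have hεC : ε * (C1 + 1) = δ := by
            rw [hεdef, div_mul_cancel₀]; linarith
          have h1 : (M:ℝ) * C1 ≤ (M:ℝ) * (C1 + 1) :=
            mul_le_mul_of_nonneg_left (by linarith) (Nat.cast_nonneg _)
          have h2 : (M:ℝ) * (C1 + 1) ≤ ε * A ^ (1 + κ) * (C1 + 1) :=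
            mul_le_mul_of_nonneg_right hM_lt.le (by linarith)
          calc (M:ℝ) * C1 ≤ ε * A ^ (1 + κ) * (C1 + 1) := le_trans h1 h2
            _ = δ * A ^ (1 + κ) := by rw [mul_right_comm, hεC]
            _ = δ * (A * A ^ κ) := by rw [hAsplit]
            _ = δ * A * A ^ κ := by ring
  -- Markov bound for each i
  have hmark : ∀ i, ℙ {ω | A ≤ |X i ω|} ≤ ENNReal.ofReal (Cθ / A ^ θ) := by
    intro i
    have hgθ : Measurable (fun t : ℝ => |t| ^ θ) := by measurability
    have idθ : IdentDistrib (fun ω => |X i ω| ^ θ) (fun ω => |X 0 ω| ^ θ) ℙ ℙ :=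
      (hident i).comp hgθ
    have hint_i : Integrable (fun ω => |X i ω| ^ θ) := idθ.integrable_iff.2 hintθ
    have hmarkov := mul_meas_ge_le_integral_of_nonneg
      (Filter.Eventually.of_forall fun ω => Real.rpow_nonneg (abs_nonneg (X i ω)) θ)
      hint_i (A ^ θ)
    rw [idθ.integral_eq] at hmarkov
    have hsub : {ω | A ≤ |X i ω|} ⊆ {ω | A ^ θ ≤ |X i ω| ^ θ} := by
      intro ω hω
      exact Real.rpow_le_rpow hA0.le hω hθ0.le
    calc ℙ {ω | A ≤ |X i ω|} ≤ ℙ {ω | A ^ θ ≤ |X i ω| ^ θ} := measure_mono hsub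
      _ = ENNReal.ofReal (ℙ {ω | A ^ θ ≤ |X i ω| ^ θ}).toReal := by
          rw [ENNReal.ofReal_toReal (measure_ne_top _ _)]
      _ ≤ ENNReal.ofReal (Cθ / A ^ θ) := by
          apply ENNReal.ofReal_le_ofReal
          rw [le_div_iff₀ hxθ0, mul_comm]
          exact hmarkov
  -- Chebyshev
  have hc0 : (0:ℝ) < K * A / Real.sqrt 2 := by positivity
  have hFmem : MemLp F 2 ℙ := memLp_finset_sum' _ fun i _ => hYmem i
  have hcheb := meas_ge_le_variance_div_sq (μ := ℙ) hFmem hc0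
  -- variance bound
  have hvarY0 : variance (Y 0) ℙ ≤ A ^ (2 - θ) * Cθ := by
    have h1 : variance (Y 0) ℙ ≤ ∫ ω, (Y 0 ω) ^ 2 := by
      have := variance_le_expectation_sq (μ := ℙ) (hYmem 0).1
      simpa using this
    have h2 : ∀ ω, (Y 0 ω) ^ 2 ≤ A ^ (2 - θ) * |X 0 ω| ^ θ := by
      intro ω
      have e1 : (Y 0 ω) ^ 2 = |Y 0 ω| ^ θ * |Y 0 ω| ^ (2 - θ) := by
        rw [← Real.rpow_add' (abs_nonneg _) (by norm_num : θ + (2 - θ) ≠ 0),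
          show θ + (2 - θ) = ((2:ℕ):ℝ) by push_cast; ring, Real.rpow_natCast, sq_abs]
      rw [e1]
      have hb1 : |Y 0 ω| ^ θ ≤ |X 0 ω| ^ θ :=
        Real.rpow_le_rpow (abs_nonneg _) (abs_truncation_le_abs_self _ _ _) hθ0.le
      have hb2 : |Y 0 ω| ^ (2 - θ) ≤ A ^ (2 - θ) := by
        apply Real.rpow_le_rpow (abs_nonneg _) _ (by linarith)
        have := abs_truncation_le_bound (X 0) A ω
        rwa [abs_of_nonneg hA0.le] at this
      calc |Y 0 ω| ^ θ * |Y 0 ω| ^ (2 - θ)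
          ≤ |X 0 ω| ^ θ * A ^ (2 - θ) :=
            mul_le_mul hb1 hb2 (Real.rpow_nonneg (abs_nonneg _) _)
              (Real.rpow_nonneg (abs_nonneg _) _)
        _ = A ^ (2 - θ) * |X 0 ω| ^ θ := mul_comm _ _
    have h3 : ∫ ω, (Y 0 ω) ^ 2 ≤ ∫ ω, A ^ (2 - θ) * |X 0 ω| ^ θ :=
      integral_mono ((hYmem 0).integrable_sq) (hintθ.const_mul _) h2
    rw [integral_const_mul] at h3
    exact le_trans h1 h3
  have hvarF : variance F ℙ ≤ (M:ℝ) * (A ^ (2 - θ) * Cθ) := by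
    have hsum : variance F ℙ = ∑ i ∈ Finset.range M, variance (Y i) ℙ := by
      rw [hFdef]
      exact IndepFun.variance_sum (fun i _ => hYmem i)
        (fun i _ j _ hij => hYindep.indepFun hij)
    rw [hsum]
    calc ∑ i ∈ Finset.range M, variance (Y i) ℙ
        = ∑ i ∈ Finset.range M, variance (Y 0) ℙ :=
          Finset.sum_congr rfl fun i _ => (hYid i).variance_eq
      _ = (M:ℝ) * variance (Y 0) ℙ := by
          rw [Finset.sum_const, Finset.card_range, nsmul_eq_mul]
      _ ≤ (M:ℝ) * (A ^ (2 - θ) * Cθ) :=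
          mul_le_mul_of_nonneg_left hvarY0 (Nat.cast_nonneg _)
  -- bound the Chebyshev RHS
  have hA2 : A ^ (2:ℕ) = A ^ θ * A ^ (2 - θ) := by
    rw [← Real.rpow_add hA0, show θ + (2 - θ) = ((2:ℕ):ℝ) by push_cast; ring,
      Real.rpow_natCast]
  have hchebR : variance F ℙ / (K * A / Real.sqrt 2) ^ 2
      ≤ 2 * Cθ * (M:ℝ) / (K ^ 2 * A ^ θ) := by
    have hc2 : (K * A / Real.sqrt 2) ^ 2 = K ^ 2 * A ^ (2:ℕ) / 2 := by
      rw [div_pow, mul_pow, Real.sq_sqrt (by norm_num : (0:ℝ) ≤ 2)]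
    rw [hc2]
    rw [div_le_div_iff₀ (by positivity) (by positivity)]
    have expand : 2 * Cθ * (M:ℝ) * (K ^ 2 * A ^ (2:ℕ) / 2)
        = (M:ℝ) * (A ^ (2 - θ) * Cθ) * (K ^ 2 * A ^ θ) := by
      rw [hA2]; ring
    rw [expand]
    exact mul_le_mul_of_nonneg_right hvarF (by positivity)
  -- main set inclusion
  have hKδ : K - δ = K / Real.sqrt 2 := by rw [hδdef]; ring
  have hincl : {ω | K * x n < |(∑ i ∈ Finset.range (m n), X i ω) - (m n : ℝ) * μ|}
      ⊆ (⋃ i ∈ Finset.range M, {ω | A ≤ |X i ω|})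
        ∪ {ω | K * A / Real.sqrt 2 ≤ |F ω - ∫ ω', F ω'|} := by
    intro ω hω
    simp only [Set.mem_setOf_eq] at hω
    by_cases hcase : ∀ i ∈ Finset.range M, |X i ω| < A
    · right
      have hFS : F ω = ∑ i ∈ Finset.range M, X i ω := by
        rw [hFapply]
        exact Finset.sum_congr rfl fun i hi => truncation_eq_self (hcase i hi)
      simp only [Set.mem_setOf_eq]
      have h1 : K * A < |F ω - (M:ℝ) * μ| := by rw [hFS]; exact hω
      have h2 : |F ω - (M:ℝ) * μ| ≤ |F ω - ∫ ω', F ω'| + |(∫ ω', F ω') - (M:ℝ) * μ| :=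
        abs_sub_le _ _ _
      have h3 : |(∫ ω', F ω') - (M:ℝ) * μ| ≤ δ * A := by
        rw [abs_sub_comm]; exact hcent
      have h4 : K * A - δ * A ≤ |F ω - ∫ ω', F ω'| := by linarith
      have h5 : K * A / Real.sqrt 2 = (K - δ) * A := by rw [hKδ]; ring
      rw [h5]
      linarith
    · left
      push_neg at hcase
      obtain ⟨i, hi, hAi⟩ := hcase
      exact Set.mem_biUnion hi hAi
  -- put everything together
  calc ℙ {ω | K * x n < |(∑ i ∈ Finset.range (m n), X i ω) - (m n : ℝ) * μ|}
      ≤ ℙ ((⋃ i ∈ Finset.range M, {ω | A ≤ |X i ω|})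
          ∪ {ω | K * A / Real.sqrt 2 ≤ |F ω - ∫ ω', F ω'|}) := measure_mono hincl
    _ ≤ ℙ (⋃ i ∈ Finset.range M, {ω | A ≤ |X i ω|})
        + ℙ {ω | K * A / Real.sqrt 2 ≤ |F ω - ∫ ω', F ω'|} := measure_union_le _ _
    _ ≤ (∑ _i ∈ Finset.range M, ENNReal.ofReal (Cθ / A ^ θ))
        + ENNReal.ofReal (variance F ℙ / (K * A / Real.sqrt 2) ^ 2) := by
        refine add_le_add ?_ hcheb
        exact le_trans (measure_biUnion_finset_le _ _)
          (Finset.sum_le_sum fun i _ => hmark i)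
    _ ≤ ENNReal.ofReal ((M:ℝ) * (Cθ / A ^ θ))
        + ENNReal.ofReal (2 * Cθ * (M:ℝ) / (K ^ 2 * A ^ θ)) := by
        refine add_le_add ?_ (ENNReal.ofReal_le_ofReal hchebR)
        rw [Finset.sum_const, Finset.card_range, nsmul_eq_mul,
          ENNReal.ofReal_mul (Nat.cast_nonneg _), ENNReal.ofReal_natCast]
    _ = ENNReal.ofReal (Cθ * (2 / K ^ 2 + 1) * (M:ℝ) / A ^ θ) := by
        rw [← ENNReal.ofReal_add (by positivity) (by positivity)]
        congr 1
        field_simp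
        ring
end

section
/- Let X₁, X₂, … be i.i.d. real random variables with E[|X₁|^{1+κ}] < ∞ for some κ > 0, set μ = E[X₁], S_n = X₁ + ⋯ + X_n, and θ = min{1+κ, 2}. Then for any 0 ≤ γ < 1 − 1/θ and any constant K > 0, there exists n₀ ≥ 1 such that for all n ≥ n₀, P(|S_n − nμ| > K n^{1−γ}) ≤ E[|X₁|^θ] (2/K² + 1) n^{−θ(1 − 1/θ − γ)}. -/
open MeasureTheory ProbabilityTheory


lemma markov_aux {Ω : Type*} [MeasureSpace Ω] [IsProbabilityMeasure (ℙ : Measure Ω)]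
    {f : Ω → ℝ} (hne : 0 ≤ᵐ[ℙ] f) (hint : Integrable f) {ε : ℝ} (hε : 0 < ε) :
    ℙ {ω | ε ≤ f ω} ≤ ENNReal.ofReal ((∫ ω, f ω) / ε) := by
  have h := mul_meas_ge_le_integral_of_nonneg hne hint ε
  rw [ENNReal.le_ofReal_iff_toReal_le (measure_ne_top _ _)
    (div_nonneg (integral_nonneg_of_ae hne) hε.le), le_div_iff₀ hε]
  simp only [Measure.real] at h
  linarith

lemma sq_int_aux {Ω : Type*} [MeasureSpace Ω] [IsProbabilityMeasure (ℙ : Measure Ω)]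
    {W : Ω → ℝ} (hW : MemLp W 2 ℙ) (c : ℝ) :
    ∫ ω, (W ω - c) ^ 2 = variance W ℙ + ((∫ ω, W ω) - c) ^ 2 := by
  have h1 : Integrable W ℙ := hW.integrable one_le_two
  have h2 : Integrable (fun ω => W ω ^ 2) ℙ := hW.integrable_sq
  have e : ∀ ω, (W ω - c) ^ 2 = W ω ^ 2 - (2 * c) * W ω + c ^ 2 := fun ω => by ring
  simp_rw [e]
  have i3 : Integrable (fun ω => W ω ^ 2 - 2 * c * W ω) ℙ := h2.sub (h1.const_mul _)
  rw [integral_add i3 (integrable_const _), integral_sub h2 (h1.const_mul _),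
    integral_const_mul, integral_const, variance_eq_sub hW]
  simp only [measure_univ, ENNReal.toReal_one, probReal_univ, smul_eq_mul, one_mul, Pi.pow_apply]
  ring

/-- For i.i.d. `X_i` with `E[|X₁|^{1+κ}] < ∞`, `μ = E[X₁]`,
`θ = min(1+κ,2)`, any `0 ≤ γ < 1 − 1/θ` and any `K > 0`, eventually in `n`:
`P(|S_n − nμ| > K n^{1−γ}) ≤ E[|X₁|^θ](2/K² + 1) n^{−θ(1−1/θ−γ)}`. -/
theorem stmt_9 {Ω : Type*} [MeasureSpace Ω] [IsProbabilityMeasure (ℙ : Measure Ω)]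
    (X : ℕ → Ω → ℝ) (hXmeas : ∀ i, Measurable (X i))
    (hiid : iIndepFun X ℙ)
    (hident : ∀ i, IdentDistrib (X i) (X 0) ℙ ℙ)
    (κ : ℝ) (hκ : 0 < κ)
    (hmom : Integrable (fun ω => |X 0 ω| ^ (1 + κ)))
    (μ θ : ℝ) (hμ : μ = ∫ ω, X 0 ω) (hθ : θ = min (1 + κ) 2)
    (γ : ℝ) (hγ0 : 0 ≤ γ) (hγ1 : γ < 1 - 1 / θ)
    (K : ℝ) (hK : 0 < K) :
    ∃ n0 : ℕ, ∀ n ≥ n0,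
      ℙ {ω | K * (n : ℝ) ^ (1 - γ) < |(∑ i ∈ Finset.range n, X i ω) - (n : ℝ) * μ|}
        ≤ ENNReal.ofReal
            ((∫ ω, |X 0 ω| ^ θ) * (2 / K ^ 2 + 1) * (n : ℝ) ^ (-(θ * (1 - 1 / θ - γ)))) := by
  -- basic facts about θ and γ
  have hθ1 : 1 < θ := by rw [hθ]; exact lt_min (by linarith) one_lt_two
  have hθ0 : 0 < θ := by linarith
  have hθ2 : θ ≤ 2 := by rw [hθ]; exact min_le_right _ _
  have hθκ : θ ≤ 1 + κ := by rw [hθ]; exact min_le_left _ _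
  have hθinv : 0 < 1 / θ := by positivity
  have hγlt : γ < 1 := by linarith
  set α : ℝ := θ * (1 - γ) - 1 with hα_def
  have hαE : -(θ * (1 - 1 / θ - γ)) = -α := by
    have : θ * (1 / θ) = 1 := mul_one_div_cancel hθ0.ne'
    rw [hα_def]; nlinarith [this]
  have hα : 0 < α := by
    have h1 : 1 / θ < 1 - γ := by linarith
    have h2 : (1 / θ) * θ < (1 - γ) * θ := by
      exact mul_lt_mul_of_pos_right h1 hθ0
    rw [one_div_mul_cancel hθ0.ne'] at h2
    rw [hα_def]; nlinarith
  -- integrability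
  have hmeasθ : Measurable fun ω => |X 0 ω| ^ θ :=
    (Real.continuous_rpow_const hθ0.le).measurable.comp ((hXmeas 0).abs)
  have hdom : ∀ x : ℝ, |x| ^ θ ≤ 1 + |x| ^ (1 + κ) := by
    intro x
    rcases le_or_gt (|x|) 1 with h | h
    · have h1 : |x| ^ θ ≤ 1 := Real.rpow_le_one (abs_nonneg x) h hθ0.le
      have h2 : (0:ℝ) ≤ |x| ^ (1 + κ) := Real.rpow_nonneg (abs_nonneg x) _
      linarith
    · have h1 : |x| ^ θ ≤ |x| ^ (1 + κ) := Real.rpow_le_rpow_of_exponent_le h.le hθκ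
      linarith
  have hIntθ : Integrable (fun ω => |X 0 ω| ^ θ) := by
    refine Integrable.mono ((integrable_const (1:ℝ)).add hmom) hmeasθ.aestronglyMeasurable
      (ae_of_all _ fun ω => ?_)
    simp only [Pi.add_apply]
    rw [Real.norm_eq_abs, Real.norm_eq_abs,
      abs_of_nonneg (Real.rpow_nonneg (abs_nonneg _) _),
      abs_of_nonneg (by positivity : (0:ℝ) ≤ 1 + |X 0 ω| ^ (1 + κ))]
    exact hdom _
  have hIntX : Integrable (X 0) := by
    refine Integrable.mono ((integrable_const (1:ℝ)).add hmom) (hXmeas 0).aestronglyMeasurable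
      (ae_of_all _ fun ω => ?_)
    simp only [Pi.add_apply]
    rw [Real.norm_eq_abs, Real.norm_eq_abs,
      abs_of_nonneg (by positivity : (0:ℝ) ≤ 1 + |X 0 ω| ^ (1 + κ))]
    rcases le_or_gt (|X 0 ω|) 1 with h | h
    · have h2 : (0:ℝ) ≤ |X 0 ω| ^ (1 + κ) := Real.rpow_nonneg (abs_nonneg _) _
      linarith
    · have h1 : |X 0 ω| ^ (1:ℝ) ≤ |X 0 ω| ^ (1 + κ) :=
        Real.rpow_le_rpow_of_exponent_le h.le (by linarith)
      rw [Real.rpow_one] at h1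
      linarith
  set M : ℝ := ∫ ω, |X 0 ω| ^ θ with hM_def
  have hM0 : 0 ≤ M := integral_nonneg fun ω => Real.rpow_nonneg (abs_nonneg _) _
  -- choice of n0
  obtain ⟨n0, hn0⟩ := exists_nat_ge (max 1 (M ^ (1 / α)))
  refine ⟨n0, fun n hn => ?_⟩
  have hp1 : (1:ℝ) ≤ (n:ℝ) :=
    le_trans (le_trans (le_max_left _ _) hn0) (Nat.cast_le.mpr hn)
  have hp : (0:ℝ) < (n:ℝ) := by linarith
  have hMn : M ≤ (n:ℝ) ^ α := by
    have h1 : M ^ (1 / α) ≤ (n:ℝ) :=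
      le_trans (le_trans (le_max_right _ _) hn0) (Nat.cast_le.mpr hn)
    have h2 : (M ^ (1 / α)) ^ α ≤ (n:ℝ) ^ α :=
      Real.rpow_le_rpow (Real.rpow_nonneg hM0 _) h1 hα.le
    rwa [← Real.rpow_mul hM0, one_div_mul_cancel hα.ne', Real.rpow_one] at h2
  -- truncation level and threshold
  set b : ℝ := (n:ℝ) ^ (1 - γ) with hb_def
  have hb1 : (1:ℝ) ≤ b := by
    rw [hb_def]
    calc (1:ℝ) = (n:ℝ) ^ (0:ℝ) := (Real.rpow_zero _).symm
      _ ≤ (n:ℝ) ^ (1 - γ) := Real.rpow_le_rpow_of_exponent_le hp1 (by linarith)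
  have hb0 : (0:ℝ) < b := lt_of_lt_of_le one_pos hb1
  set t : ℝ := K * b with ht_def
  have ht : 0 < t := mul_pos hK hb0
  -- truncated variables
  set φ : ℝ → ℝ := fun x => if |x| ≤ b then x else 0 with hφ_def
  have hφm : Measurable φ :=
    Measurable.ite (measurableSet_le measurable_abs measurable_const) measurable_id
      measurable_const
  set Y : ℕ → Ω → ℝ := fun i => φ ∘ X i with hY_def
  have hYm : ∀ i, Measurable (Y i) := fun i => hφm.comp (hXmeas i)
  have hYb : ∀ i ω, |Y i ω| ≤ b := by
    intro i ω
    simp only [hY_def, Function.comp_apply, hφ_def]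
    split_ifs with h
    · exact h
    · simpa using hb0.le
  have hYid : ∀ i, IdentDistrib (Y i) (Y 0) ℙ ℙ := fun i => (hident i).comp hφm
  have hY2 : ∀ i, MemLp (Y i) 2 ℙ := fun i =>
    MemLp.of_bound (hYm i).aestronglyMeasurable b
      (ae_of_all _ fun ω => by rw [Real.norm_eq_abs]; exact hYb i ω)
  have hYint : ∀ i, Integrable (Y i) := fun i => (hY2 i).integrable one_le_two
  set T : Ω → ℝ := ∑ i ∈ Finset.range n, Y i with hT_def
  have hTapp : ∀ ω, T ω = ∑ i ∈ Finset.range n, Y i ω := fun ω => by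
    rw [hT_def]; exact Finset.sum_apply _ _ _
  have hT2 : MemLp T 2 ℙ := memLp_finset_sum' _ fun i _ => hY2 i
  have hTm : Measurable T := by
    have h := Finset.measurable_sum (Finset.range n) (fun i _ => hYm i)
    convert h using 1
    funext ω; exact hTapp ω
  set m : ℝ := ∫ ω, Y 0 ω with hm_def
  have hTmean : ∫ ω, T ω = (n:ℝ) * m := by
    simp_rw [hTapp]
    rw [integral_finset_sum _ fun i _ => hYint i,
      Finset.sum_congr rfl fun i _ => (hYid i).integral_eq]
    simp [Finset.sum_const, Finset.card_range, nsmul_eq_mul, hm_def]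
  have hVarT : variance T ℙ = (n:ℝ) * variance (Y 0) ℙ := by
    rw [hT_def, IndepFun.variance_sum (fun i _ => hY2 i)
      (fun i _ j _ hij => (hiid.comp (fun _ => φ) fun _ => hφm).indepFun hij),
      Finset.sum_congr rfl fun i _ => (hYid i).variance_eq]
    simp [Finset.sum_const, Finset.card_range, nsmul_eq_mul]
  -- tail bound for each X i
  have htail : ∀ i, ℙ {ω | b < |X i ω|} ≤ ENNReal.ofReal (M / b ^ θ) := by
    intro i
    have hs : MeasurableSet {x : ℝ | b < |x|} :=
      measurableSet_lt measurable_const measurable_abs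
    have heq : ℙ {ω | b < |X i ω|} = ℙ {ω | b < |X 0 ω|} := (hident i).measure_mem_eq hs
    rw [heq]
    refine le_trans (measure_mono ?_)
      (markov_aux (ae_of_all _ fun ω => Real.rpow_nonneg (abs_nonneg _) _) hIntθ
        (Real.rpow_pos_of_pos hb0 θ))
    intro ω hω
    exact Real.rpow_le_rpow hb0.le (le_of_lt hω) hθ0.le
  set U : Set Ω := ⋃ i ∈ Finset.range n, {ω | b < |X i ω|} with hU_def
  have hU : ℙ U ≤ ENNReal.ofReal ((n:ℝ) * (M / b ^ θ)) := by
    refine le_trans (measure_biUnion_finset_le _ _) ?_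
    refine le_trans (Finset.sum_le_sum fun i _ => htail i) ?_
    rw [Finset.sum_const, Finset.card_range, nsmul_eq_mul,
      ← ENNReal.ofReal_natCast n, ← ENNReal.ofReal_mul (Nat.cast_nonneg n)]
  -- Chebyshev part
  set f2 : Ω → ℝ := fun ω => (T ω - (n:ℝ) * μ) ^ 2 with hf2_def
  have hf2int : Integrable f2 := by
    refine Integrable.mono' (integrable_const (((n:ℝ) * b + (n:ℝ) * |μ|) ^ 2))
      (((hTm.sub measurable_const).pow_const 2).aestronglyMeasurable)
      (ae_of_all _ fun ω => ?_)
    rw [Real.norm_eq_abs, abs_of_nonneg (sq_nonneg _)]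
    have h1 : |T ω| ≤ (n:ℝ) * b := by
      rw [hTapp]
      calc |∑ i ∈ Finset.range n, Y i ω| ≤ ∑ i ∈ Finset.range n, |Y i ω| :=
            Finset.abs_sum_le_sum_abs _ _
        _ ≤ ∑ _i ∈ Finset.range n, b := Finset.sum_le_sum fun i _ => hYb i ω
        _ = (n:ℝ) * b := by simp [Finset.sum_const, Finset.card_range, nsmul_eq_mul]
    have h2 : |T ω - (n:ℝ) * μ| ≤ (n:ℝ) * b + (n:ℝ) * |μ| := by
      calc |T ω - (n:ℝ) * μ| ≤ |T ω| + |(n:ℝ) * μ| := abs_sub _ _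
        _ ≤ (n:ℝ) * b + (n:ℝ) * |μ| := by
            rw [abs_mul, abs_of_nonneg hp.le]
            exact add_le_add h1 le_rfl
    calc f2 ω = |T ω - (n:ℝ) * μ| ^ 2 := by rw [hf2_def]; rw [sq_abs]
      _ ≤ ((n:ℝ) * b + (n:ℝ) * |μ|) ^ 2 := pow_le_pow_left₀ (abs_nonneg _) h2 2
  have hcheb : ℙ {ω | t ^ 2 ≤ f2 ω} ≤ ENNReal.ofReal ((∫ ω, f2 ω) / t ^ 2) :=
    markov_aux (ae_of_all _ fun ω => sq_nonneg _) hf2int (by positivity)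
  -- event inclusion
  have hsub : {ω | K * (n : ℝ) ^ (1 - γ) < |(∑ i ∈ Finset.range n, X i ω) - (n : ℝ) * μ|}
      ⊆ U ∪ {ω | t ^ 2 ≤ f2 ω} := by
    intro ω hω
    by_cases hU' : ω ∈ U
    · exact Or.inl hU'
    · right
      have hXY : ∀ i ∈ Finset.range n, Y i ω = X i ω := by
        intro i hi
        have hnot : ¬ b < |X i ω| := by
          intro hcon
          exact hU' (Set.mem_biUnion hi hcon)
        simp [hY_def, hφ_def, not_lt.mp hnot]
      have hTS : T ω = ∑ i ∈ Finset.range n, X i ω := by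
        rw [hTapp]; exact Finset.sum_congr rfl hXY
      have hω' : t < |T ω - (n:ℝ) * μ| := by
        rw [hTS, ht_def, hb_def]; exact hω
      show t ^ 2 ≤ f2 ω
      calc t ^ 2 ≤ |T ω - (n:ℝ) * μ| ^ 2 := pow_le_pow_left₀ ht.le hω'.le 2
        _ = f2 ω := by rw [hf2_def, sq_abs]
  -- variance and mean-shift bounds
  have hvar : variance (Y 0) ℙ ≤ b ^ (2 - θ) * M := by
    have hpt : ∀ ω, (Y 0 ω) ^ 2 ≤ b ^ (2 - θ) * |X 0 ω| ^ θ := by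
      intro ω
      by_cases h : |X 0 ω| ≤ b
      · have hy : Y 0 ω = X 0 ω := by simp [hY_def, hφ_def, h]
        rw [hy]
        rcases eq_or_lt_of_le (abs_nonneg (X 0 ω)) with h0 | h0
        · have hx : X 0 ω = 0 := abs_eq_zero.mp h0.symm
          rw [hx]
          have : (0:ℝ) ≤ b ^ (2 - θ) * |(0:ℝ)| ^ θ := by positivity
          simpa using this
        · have e1 : (X 0 ω) ^ 2 = |X 0 ω| ^ θ * |X 0 ω| ^ (2 - θ) := by
            rw [← Real.rpow_add h0, show θ + (2 - θ) = ((2:ℕ):ℝ) by norm_num,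
              Real.rpow_natCast, sq_abs]
          rw [e1, mul_comm (b ^ (2 - θ))]
          refine mul_le_mul_of_nonneg_left ?_ (Real.rpow_nonneg (abs_nonneg _) _)
          exact Real.rpow_le_rpow (abs_nonneg _) h (by linarith)
      · have hy : Y 0 ω = 0 := by simp [hY_def, hφ_def, h]
        rw [hy]
        have : (0:ℝ) ≤ b ^ (2 - θ) * |X 0 ω| ^ θ := by positivity
        simpa using this
    refine le_trans (variance_le_expectation_sq (hYm 0).aestronglyMeasurable) ?_
    have h1 : Integrable (fun ω => (Y 0 ω) ^ 2) := (hY2 0).integrable_sq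
    calc (∫ ω, ((Y 0) ^ 2) ω) = ∫ ω, (Y 0 ω) ^ 2 := by simp only [Pi.pow_apply]
      _ ≤ ∫ ω, b ^ (2 - θ) * |X 0 ω| ^ θ :=
          integral_mono h1 (hIntθ.const_mul _) hpt
      _ = b ^ (2 - θ) * M := by rw [integral_const_mul]
  have hδ : |m - μ| ≤ b ^ (1 - θ) * M := by
    have hpt2 : ∀ ω, |Y 0 ω - X 0 ω| ≤ b ^ (1 - θ) * |X 0 ω| ^ θ := by
      intro ω
      by_cases h : |X 0 ω| ≤ b
      · have hy : Y 0 ω = X 0 ω := by simp [hY_def, hφ_def, h]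
        rw [hy, sub_self, abs_zero]
        positivity
      · push_neg at h
        have hy : Y 0 ω = 0 := by simp [hY_def, hφ_def, not_le.mpr h]
        have hx0 : (0:ℝ) < |X 0 ω| := lt_trans hb0 h
        rw [hy, zero_sub, abs_neg]
        have e1 : |X 0 ω| = |X 0 ω| ^ θ * |X 0 ω| ^ (1 - θ) := by
          rw [← Real.rpow_add hx0, show θ + (1 - θ) = (1:ℝ) by ring, Real.rpow_one]
        calc |X 0 ω| = |X 0 ω| ^ θ * |X 0 ω| ^ (1 - θ) := e1
          _ ≤ |X 0 ω| ^ θ * b ^ (1 - θ) := by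
              refine mul_le_mul_of_nonneg_left ?_ (Real.rpow_nonneg (abs_nonneg _) _)
              exact Real.rpow_le_rpow_of_nonpos hb0 h.le (by linarith)
          _ = b ^ (1 - θ) * |X 0 ω| ^ θ := by ring
    have hsub' : m - μ = ∫ ω, (Y 0 ω - X 0 ω) := by
      rw [hm_def, hμ, ← integral_sub (hYint 0) hIntX]
    rw [hsub']
    calc |∫ ω, (Y 0 ω - X 0 ω)| ≤ ∫ ω, |Y 0 ω - X 0 ω| := by
          simpa [Real.norm_eq_abs] using
            norm_integral_le_integral_norm (fun ω => Y 0 ω - X 0 ω)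
      _ ≤ ∫ ω, b ^ (1 - θ) * |X 0 ω| ^ θ :=
          integral_mono ((hYint 0).sub hIntX).abs (hIntθ.const_mul _) hpt2
      _ = b ^ (1 - θ) * M := by rw [integral_const_mul]
  -- integral of f2
  have hq : ∫ ω, f2 ω = (n:ℝ) * variance (Y 0) ℙ + ((n:ℝ) * m - (n:ℝ) * μ) ^ 2 := by
    have h := sq_int_aux hT2 ((n:ℝ) * μ)
    rw [hTmean, hVarT] at h
    exact h
  have hqb : ∫ ω, f2 ω ≤ (n:ℝ) * (b ^ (2 - θ) * M) + ((n:ℝ) * (b ^ (1 - θ) * M)) ^ 2 := by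
    rw [hq]
    refine add_le_add (mul_le_mul_of_nonneg_left hvar hp.le) ?_
    have habs : |(n:ℝ) * m - (n:ℝ) * μ| ≤ (n:ℝ) * (b ^ (1 - θ) * M) := by
      rw [← mul_sub, abs_mul, abs_of_nonneg hp.le]
      exact mul_le_mul_of_nonneg_left hδ hp.le
    calc ((n:ℝ) * m - (n:ℝ) * μ) ^ 2 = |(n:ℝ) * m - (n:ℝ) * μ| ^ 2 := (sq_abs _).symm
      _ ≤ ((n:ℝ) * (b ^ (1 - θ) * M)) ^ 2 := pow_le_pow_left₀ (abs_nonneg _) habs 2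
  -- real arithmetic
  have hreal : (n:ℝ) * (M / b ^ θ) + (∫ ω, f2 ω) / t ^ 2
      ≤ M * (2 / K ^ 2 + 1) * (n:ℝ) ^ (-(θ * (1 - 1 / θ - γ))) := by
    rw [hαE]
    have hNpos : ∀ x : ℝ, 0 < (n:ℝ) ^ x := fun x => Real.rpow_pos_of_pos hp x
    have hbθ : b ^ θ = (n:ℝ) ^ ((1 - γ) * θ) := by
      rw [hb_def, ← Real.rpow_mul hp.le]
    have hb2θ : b ^ (2 - θ) = (n:ℝ) ^ ((1 - γ) * (2 - θ)) := by
      rw [hb_def, ← Real.rpow_mul hp.le]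
    have hb1θ : b ^ (1 - θ) = (n:ℝ) ^ ((1 - γ) * (1 - θ)) := by
      rw [hb_def, ← Real.rpow_mul hp.le]
    have hbsq : b ^ (2:ℕ) = (n:ℝ) ^ ((1 - γ) * 2) := by
      rw [hb_def, ← Real.rpow_natCast ((n:ℝ) ^ (1 - γ)) 2, ← Real.rpow_mul hp.le]
      norm_num
    have ha4 : M * (n:ℝ) ^ (-α) ≤ 1 := by
      have h := (div_le_one (hNpos α)).mpr hMn
      rwa [div_eq_mul_inv, ← Real.rpow_neg hp.le] at h
    have ha1 : (n:ℝ) * (M / b ^ θ) = M * (n:ℝ) ^ (-α) := by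
      rw [hbθ, show (1 - γ) * θ = 1 + α by rw [hα_def]; ring, Real.rpow_add hp,
        Real.rpow_one, Real.rpow_neg hp.le]
      have h1 : (n:ℝ) ≠ 0 := hp.ne'
      have h2 : (n:ℝ) ^ α ≠ 0 := (hNpos α).ne'
      field_simp
    have ha2 : (n:ℝ) * (b ^ (2 - θ) * M) / t ^ 2 = M / K ^ 2 * (n:ℝ) ^ (-α) := by
      rw [ht_def, mul_pow, hbsq, hb2θ,
        show (1 - γ) * 2 = 1 + (1 - γ) * (2 - θ) + α by rw [hα_def]; ring,
        Real.rpow_add hp, Real.rpow_add hp, Real.rpow_one, Real.rpow_neg hp.le]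
      have h1 : (n:ℝ) ≠ 0 := hp.ne'
      have h2 : (n:ℝ) ^ α ≠ 0 := (hNpos α).ne'
      have h3 : (n:ℝ) ^ ((1 - γ) * (2 - θ)) ≠ 0 := (hNpos _).ne'
      have h4 : K ≠ 0 := hK.ne'
      field_simp
    have ha3 : ((n:ℝ) * (b ^ (1 - θ) * M)) ^ 2 / t ^ 2
        = M / K ^ 2 * (n:ℝ) ^ (-α) * (M * (n:ℝ) ^ (-α)) := by
      have hq2 : ((n:ℝ) ^ ((1 - γ) * (1 - θ))) ^ (2:ℕ)
          = (n:ℝ) ^ ((1 - γ) * (1 - θ) * 2) := by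
        rw [← Real.rpow_natCast ((n:ℝ) ^ ((1 - γ) * (1 - θ))) 2, ← Real.rpow_mul hp.le]
        norm_num
      have hn2 : ((n:ℝ)) ^ (2:ℕ) = (n:ℝ) ^ ((2:ℕ):ℝ) := (Real.rpow_natCast _ 2).symm
      rw [ht_def, mul_pow, mul_pow, mul_pow, hbsq, hb1θ, hq2, hn2,
        show (1 - γ) * 2 = ((2:ℕ):ℝ) + (1 - γ) * (1 - θ) * 2 + (α + α) by
          rw [hα_def]; push_cast; ring,
        Real.rpow_add hp, Real.rpow_add hp, Real.rpow_add hp, Real.rpow_neg hp.le]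
      have h1 : (n:ℝ) ≠ 0 := hp.ne'
      have h2 : (n:ℝ) ^ α ≠ 0 := (hNpos α).ne'
      have h3 : (n:ℝ) ^ ((1 - γ) * (1 - θ) * 2) ≠ 0 := (hNpos _).ne'
      have h5 : (n:ℝ) ^ ((2:ℕ):ℝ) ≠ 0 := (hNpos _).ne'
      have h4 : K ≠ 0 := hK.ne'
      field_simp
    have hstep : (∫ ω, f2 ω) / t ^ 2
        ≤ M / K ^ 2 * (n:ℝ) ^ (-α) + M / K ^ 2 * (n:ℝ) ^ (-α) * (M * (n:ℝ) ^ (-α)) := by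
      have hstep0 : (∫ ω, f2 ω) / t ^ 2
          ≤ ((n:ℝ) * (b ^ (2 - θ) * M) + ((n:ℝ) * (b ^ (1 - θ) * M)) ^ 2) / t ^ 2 := by
        gcongr
      rw [add_div, ha2, ha3] at hstep0
      exact hstep0
    have hMK : 0 ≤ M / K ^ 2 * (n:ℝ) ^ (-α) := by positivity
    calc (n:ℝ) * (M / b ^ θ) + (∫ ω, f2 ω) / t ^ 2
        ≤ M * (n:ℝ) ^ (-α)
          + (M / K ^ 2 * (n:ℝ) ^ (-α) + M / K ^ 2 * (n:ℝ) ^ (-α) * (M * (n:ℝ) ^ (-α))) := by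
          rw [ha1]; exact add_le_add_right hstep _
      _ ≤ M * (n:ℝ) ^ (-α)
          + (M / K ^ 2 * (n:ℝ) ^ (-α) + M / K ^ 2 * (n:ℝ) ^ (-α) * 1) := by
          refine add_le_add_right (add_le_add_right ?_ _) _
          rw [mul_one]
          exact mul_le_of_le_one_right hMK ha4
      _ = M * (2 / K ^ 2 + 1) * (n:ℝ) ^ (-α) := by ring
  -- put it together
  calc ℙ {ω | K * (n : ℝ) ^ (1 - γ) < |(∑ i ∈ Finset.range n, X i ω) - (n : ℝ) * μ|}
      ≤ ℙ (U ∪ {ω | t ^ 2 ≤ f2 ω}) := measure_mono hsub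
    _ ≤ ℙ U + ℙ {ω | t ^ 2 ≤ f2 ω} := measure_union_le _ _
    _ ≤ ENNReal.ofReal ((n:ℝ) * (M / b ^ θ)) + ENNReal.ofReal ((∫ ω, f2 ω) / t ^ 2) :=
        add_le_add hU hcheb
    _ = ENNReal.ofReal ((n:ℝ) * (M / b ^ θ) + (∫ ω, f2 ω) / t ^ 2) := by
        rw [← ENNReal.ofReal_add (by positivity)
          (div_nonneg (integral_nonneg fun ω => sq_nonneg _) (by positivity))]
    _ ≤ ENNReal.ofReal (M * (2 / K ^ 2 + 1) * (n:ℝ) ^ (-(θ * (1 - 1 / θ - γ)))) :=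
        ENNReal.ofReal_le_ofReal hreal
end

section
/- Let N be an ℕ-valued random variable and {C_i}_{i≥1} i.i.d. nonnegative random variables, with the family {C_i} independent of N. Then for every β ≥ 1, E[(Σ_{i=1}^{N} C_i)^β] ≤ E[N^β] · E[C₁^β] (with the convention that the inequality holds trivially if the right-hand side is infinite). -/
open MeasureTheory ProbabilityTheory

noncomputable section

lemma rpow_sum_le_aux (n : ℕ) (a : ℕ → ENNReal) {β : ℝ} (hβ : 1 ≤ β) :
    (∑ i ∈ Finset.range n, a i) ^ β
      ≤ (n : ENNReal) ^ (β - 1) * ∑ i ∈ Finset.range n, (a i) ^ β := by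
  rcases Nat.eq_zero_or_pos n with hn | hn
  · simp [hn, ENNReal.zero_rpow_of_pos (by linarith : (0:ℝ) < β)]
  have hn0 : (n : ENNReal) ≠ 0 := by simpa using hn.ne'
  have hnt : (n : ENNReal) ≠ ⊤ := ENNReal.natCast_ne_top n
  have key := ENNReal.rpow_arith_mean_le_arith_mean_rpow (Finset.range n)
    (fun _ => (n : ENNReal)⁻¹) (fun i => (n : ENNReal) * a i)
    (by simp [Finset.sum_const, ENNReal.inv_mul_cancel hn0 hnt,
      ENNReal.mul_inv_cancel hn0 hnt, mul_comm]) hβ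
  have h1 : ∀ i, (n : ENNReal)⁻¹ * ((n : ENNReal) * a i) = a i := fun i => by
    rw [← mul_assoc, ENNReal.inv_mul_cancel hn0 hnt, one_mul]
  simp only [h1] at key
  refine key.trans (le_of_eq ?_)
  rw [Finset.mul_sum]
  refine Finset.sum_congr rfl fun i _ => ?_
  rw [ENNReal.mul_rpow_of_nonneg _ _ (by linarith : (0:ℝ) ≤ β), ← mul_assoc]
  congr 1
  rw [← ENNReal.rpow_neg_one, ← ENNReal.rpow_add _ _ hn0 hnt]
  ring_nf

/-- Index type for the family consisting of `N` (at `none`) and the `C_i` (at `some i`). -/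
def ncType : Option ℕ → Type
  | none => ℕ
  | some _ => ℝ

def ncMS : ∀ i : Option ℕ, MeasurableSpace (ncType i)
  | none => (inferInstance : MeasurableSpace ℕ)
  | some _ => (inferInstance : MeasurableSpace ℝ)

/-- For `N` an ℕ-valued random variable and `{C_i}` i.i.d. nonnegative,
independent of `N`, and every `β ≥ 1`: `E[(∑_{i=1}^N C_i)^β] ≤ E[N^β]·E[C₁^β]`
(stated with lower integrals, so that it holds trivially when the right side is infinite). -/
theorem stmt_10 {Ω : Type*} [MeasureSpace Ω] [IsProbabilityMeasure (ℙ : Measure Ω)]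
    (N : Ω → ℕ) (C : ℕ → Ω → ℝ)
    (hNmeas : Measurable N) (hCmeas : ∀ i, Measurable (C i))
    (hCnn : ∀ i, ∀ᵐ ω, 0 ≤ C i ω)
    (hident : ∀ i j, IdentDistrib (C i) (C j) ℙ ℙ)
    (fam : ∀ i : Option ℕ, Ω → ncType i)
    (hfamN : fam none = N)
    (hfamC : ∀ i, fam (some i) = C i)
    (hindep : iIndepFun (m := ncMS) fam ℙ)
    (β : ℝ) (hβ : 1 ≤ β) :
    ∫⁻ ω, ENNReal.ofReal ((∑ i ∈ Finset.range (N ω), C i ω) ^ β)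
      ≤ (∫⁻ ω, ENNReal.ofReal ((N ω : ℝ) ^ β)) * ∫⁻ ω, ENNReal.ofReal (C 0 ω ^ β) := by
  have hβ0 : (0:ℝ) ≤ β := by linarith
  -- the partition
  set A : ℕ → Set Ω := fun n => N ⁻¹' {n} with hA
  have hAmeas : ∀ n, MeasurableSet (A n) := fun n => hNmeas (measurableSet_singleton n)
  have hAdisj : Pairwise (Function.onFun Disjoint A) := fun m n hmn => by
    simp only [Function.onFun, A, Set.disjoint_left]
    rintro ω rfl h
    exact hmn (by simpa using h)
  have hAunion : (⋃ n, A n) = Set.univ := by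
    ext ω; simp [A]
  -- measurable maps
  have hψmeas : Measurable (fun x : ℝ => ENNReal.ofReal (x ^ β)) :=
    (Real.continuous_rpow_const hβ0).measurable.ennreal_ofReal
  have hfimeas : ∀ i, Measurable (fun ω => ENNReal.ofReal (C i ω ^ β)) :=
    fun i => hψmeas.comp (hCmeas i)
  set E : ENNReal := ∫⁻ ω, ENNReal.ofReal (C 0 ω ^ β) with hE
  -- identically distributed
  have hidE : ∀ i, ∫⁻ ω, ENNReal.ofReal (C i ω ^ β) = E := fun i =>
    ((hident i 0).comp hψmeas).lintegral_eq
  -- independence of N and C i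
  have hindNC : ∀ i, IndepFun N (C i) ℙ := by
    intro i
    have h := hindep.indepFun (i := none) (j := some i) (by simp)
    rw [hfamN, hfamC] at h
    exact h
  -- key factorization
  have hfact : ∀ n i, ∫⁻ ω in A n, ENNReal.ofReal (C i ω ^ β) = ℙ (A n) * E := by
    intro n i
    have hφmeas : Measurable (fun m : ℕ => if m = n then (1:ENNReal) else 0) :=
      measurable_from_top
    have hind : IndepFun ((fun m : ℕ => if m = n then (1:ENNReal) else 0) ∘ N)
        ((fun x : ℝ => ENNReal.ofReal (x ^ β)) ∘ C i) ℙ :=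
      (hindNC i).comp hφmeas hψmeas
    have heq : ∀ ω, (A n).indicator (fun ω => ENNReal.ofReal (C i ω ^ β)) ω
        = ((fun m : ℕ => if m = n then (1:ENNReal) else 0) ∘ N) ω
          * ((fun x : ℝ => ENNReal.ofReal (x ^ β)) ∘ C i) ω := by
      intro ω
      by_cases h : N ω = n <;> simp [Set.indicator_apply, A, h]
    rw [← lintegral_indicator (hAmeas n)]
    calc ∫⁻ ω, (A n).indicator (fun ω => ENNReal.ofReal (C i ω ^ β)) ω
        = ∫⁻ ω, (((fun m : ℕ => if m = n then (1:ENNReal) else 0) ∘ N)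
            * ((fun x : ℝ => ENNReal.ofReal (x ^ β)) ∘ C i)) ω := by
          exact lintegral_congr heq
      _ = (∫⁻ ω, ((fun m : ℕ => if m = n then (1:ENNReal) else 0) ∘ N) ω)
            * ∫⁻ ω, ((fun x : ℝ => ENNReal.ofReal (x ^ β)) ∘ C i) ω :=
          lintegral_mul_eq_lintegral_mul_lintegral_of_indepFun
            (hφmeas.comp hNmeas) (hψmeas.comp (hCmeas i)) hind
      _ = ℙ (A n) * E := by
          congr 1
          · rw [← lintegral_indicator_one (hAmeas n)]
            refine lintegral_congr fun ω => ?_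
            by_cases h : N ω = n <;> simp [Set.indicator_apply, A, h]
          · exact hidE i
  -- the dominating function
  set G : Ω → ENNReal := fun ω =>
    (N ω : ENNReal) ^ (β - 1) * ∑ i ∈ Finset.range (N ω), ENNReal.ofReal (C i ω ^ β) with hG
  -- a.e. pointwise bound
  have haebd : ∀ᵐ ω, ENNReal.ofReal ((∑ i ∈ Finset.range (N ω), C i ω) ^ β) ≤ G ω := by
    filter_upwards [ae_all_iff.2 hCnn] with ω hω
    have hsum : ENNReal.ofReal ((∑ i ∈ Finset.range (N ω), C i ω) ^ β)
        = (∑ i ∈ Finset.range (N ω), ENNReal.ofReal (C i ω)) ^ β := by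
      rw [← ENNReal.ofReal_sum_of_nonneg (fun i _ => hω i),
        ENNReal.ofReal_rpow_of_nonneg (Finset.sum_nonneg fun i _ => hω i) hβ0]
    rw [hsum, hG]
    refine (rpow_sum_le_aux (N ω) (fun i => ENNReal.ofReal (C i ω)) hβ).trans (le_of_eq ?_)
    congr 1
    exact Finset.sum_congr rfl fun i _ =>
      ENNReal.ofReal_rpow_of_nonneg (hω i) hβ0
  -- integral of G over each piece
  have hGpiece : ∀ n, ∫⁻ ω in A n, G ω = (n : ENNReal) ^ β * ℙ (A n) * E := by
    intro n
    have h1 : ∫⁻ ω in A n, G ω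
        = ∫⁻ ω in A n, (n : ENNReal) ^ (β - 1)
            * ∑ i ∈ Finset.range n, ENNReal.ofReal (C i ω ^ β) := by
      refine setLIntegral_congr_fun (hAmeas n) (fun ω hω => ?_)
      have : N ω = n := hω
      simp [hG, this]
    rw [h1, lintegral_const_mul' _ _ (ENNReal.rpow_ne_top_of_nonneg (by linarith)
      (ENNReal.natCast_ne_top n)), lintegral_finset_sum' _ (fun i _ => (hfimeas i).aemeasurable)]
    simp only [hfact n]
    rw [Finset.sum_const, Finset.card_range, nsmul_eq_mul]
    rcases Nat.eq_zero_or_pos n with hn | hn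
    · simp [hn, ENNReal.zero_rpow_of_pos (by linarith : (0:ℝ) < β)]
    have hn0 : (n : ENNReal) ≠ 0 := by simpa using hn.ne'
    have hnt : (n : ENNReal) ≠ ⊤ := ENNReal.natCast_ne_top n
    rw [← mul_assoc, ← mul_assoc]
    congr 2
    calc (n : ENNReal) ^ (β - 1) * (n : ENNReal)
        = (n : ENNReal) ^ (β - 1) * (n : ENNReal) ^ (1:ℝ) := by rw [ENNReal.rpow_one]
      _ = (n : ENNReal) ^ β := by rw [← ENNReal.rpow_add _ _ hn0 hnt]; ring_nf
  -- the right-hand side as a sum over the partition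
  have hR : ∫⁻ ω, ENNReal.ofReal ((N ω : ℝ) ^ β) = ∑' n : ℕ, (n : ENNReal) ^ β * ℙ (A n) := by
    rw [← setLIntegral_univ, ← hAunion, lintegral_iUnion hAmeas hAdisj]
    refine tsum_congr fun n => ?_
    have : ∫⁻ ω in A n, ENNReal.ofReal ((N ω : ℝ) ^ β)
        = ∫⁻ _ in A n, (n : ENNReal) ^ β := by
      refine setLIntegral_congr_fun (hAmeas n) (fun ω hω => ?_)
      have hNω : N ω = n := hω
      rw [hNω, ← ENNReal.ofReal_rpow_of_nonneg (Nat.cast_nonneg n) hβ0,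
        ENNReal.ofReal_natCast]
    rw [this, setLIntegral_const]
  calc ∫⁻ ω, ENNReal.ofReal ((∑ i ∈ Finset.range (N ω), C i ω) ^ β)
      ≤ ∫⁻ ω, G ω := lintegral_mono_ae haebd
    _ = ∑' n, ∫⁻ ω in A n, G ω := by
        rw [← setLIntegral_univ, ← hAunion, lintegral_iUnion hAmeas hAdisj]
    _ = ∑' n : ℕ, (n : ENNReal) ^ β * ℙ (A n) * E := tsum_congr hGpiece
    _ = (∑' n : ℕ, (n : ENNReal) ^ β * ℙ (A n)) * E := ENNReal.tsum_mul_right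
    _ = (∫⁻ ω, ENNReal.ofReal ((N ω : ℝ) ^ β)) * E := by rw [hR]

end
end

section
/- Assume E[N] < ∞, E[|Q|] < ∞ and E[N]·E[|C|] < 1. Then Σ_{k=0}^∞ Σ_{i∈A_k} |Π_i| |Q_i| has finite expectation (in particular the series ℛ = Σ_{k=0}^∞ Σ_{i∈A_k} Π_i Q_i converges absolutely almost surely and in L¹), and E[ℛ] = E[Q] / (1 − E[N] E[C]). -/
open MeasureTheory ProbabilityTheory
open scoped ENNReal

noncomputable section

/-- Index type for the defining families of a weighted branching process:
the vectors `(N_i, Q_i)` for `i ∈ 𝒰` and the weights `C_i` for `i ∈ 𝒰`, `i ≠ ∅`.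
Nodes of the tree are encoded as finite sequences (`List ℕ`), children of `i`
being `i ++ [j]`, `j < N_i`. -/
def WbpIdx : Type := (List ℕ) ⊕ {l : List ℕ // l ≠ []}

def wbpType : WbpIdx → Type
  | .inl _ => ℕ × ℝ
  | .inr _ => ℝ

def wbpMS : ∀ i : WbpIdx, MeasurableSpace (wbpType i)
  | .inl _ => (inferInstance : MeasurableSpace (ℕ × ℝ))
  | .inr _ => (inferInstance : MeasurableSpace ℝ)

section AuxLemmas

variable {Ω : Type*} [MeasurableSpace Ω] {μ : Measure Ω}

lemma aux_precomp {ι ι' β : Type*} {mβ : MeasurableSpace β} {f : ι → Ω → β}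
    (u : ι' → ι) (hu : Function.Injective u) (h : iIndepFun (m := fun _ => mβ) f μ) :
    iIndepFun (m := fun _ => mβ) (fun j => f (u j)) μ := by
  classical
  rw [iIndepFun_iff_measure_inter_preimage_eq_mul] at h ⊢
  intro S sets hsets
  set sets' : ι → Set β := fun i =>
    if hh : ∃ j ∈ S, u j = i then sets hh.choose else Set.univ with hsets'def
  have hval : ∀ j ∈ S, sets' (u j) = sets j := by
    intro j hj
    have hh : ∃ j' ∈ S, u j' = u j := ⟨j, hj, rfl⟩
    have h2 := hh.choose_spec
    have h3 : hh.choose = j := hu h2.2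
    simp only [hsets'def, dif_pos hh, h3]
  have key := h (S.image u) (sets := sets') ?_
  · rw [Finset.set_biInter_finset_image] at key
    rw [Finset.prod_image (fun a _ b _ hab => hu hab)] at key
    calc μ (⋂ j ∈ S, f (u j) ⁻¹' sets j)
        = μ (⋂ j ∈ S, f (u j) ⁻¹' sets' (u j)) := by
          congr 1; exact Set.iInter₂_congr fun j hj => by rw [hval j hj]
      _ = ∏ j ∈ S, μ (f (u j) ⁻¹' sets' (u j)) := key
      _ = ∏ j ∈ S, μ (f (u j) ⁻¹' sets j) :=
          Finset.prod_congr rfl fun j hj => by rw [hval j hj]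
  · intro i hi
    rcases Finset.mem_image.1 hi with ⟨j, hj, rfl⟩
    rw [hval j hj]; exact hsets j hj

lemma aux_prod_integral {ι : Type*} [IsProbabilityMeasure μ] {F : ι → Ω → ℝ}
    (h : iIndepFun (m := fun _ => (inferInstance : MeasurableSpace ℝ)) F μ)
    (hm : ∀ i, Measurable (F i)) (hi : ∀ i, Integrable (F i) μ) (s : Finset ι) :
    Integrable (fun ω => ∏ i ∈ s, F i ω) μ ∧
      ∫ ω, ∏ i ∈ s, F i ω ∂μ = ∏ i ∈ s, ∫ ω, F i ω ∂μ := by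
  classical
  induction s using Finset.induction_on with
  | empty => simp
  | @insert a s ha ih =>
    have hprod : (fun ω => ∏ i ∈ s, F i ω) = ∏ i ∈ s, F i := by
      funext ω; rw [Finset.prod_apply]
    have hIF : IndepFun (∏ j ∈ s, F j) (F a) μ :=
      h.indepFun_finset_prod_of_notMem hm ha
    have h1 : Integrable (∏ j ∈ s, F j) μ := hprod ▸ ih.1
    have hmul : Integrable ((∏ j ∈ s, F j) * F a) μ := hIF.integrable_mul h1 (hi a)
    have heq : (fun ω => ∏ i ∈ insert a s, F i ω) = (∏ j ∈ s, F j) * F a := by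
      funext ω
      simp only [Finset.prod_insert ha, Pi.mul_apply, Finset.prod_apply, mul_comm]
    constructor
    · rw [heq]; exact hmul
    · calc ∫ ω, ∏ i ∈ insert a s, F i ω ∂μ
          = ∫ ω, ((∏ j ∈ s, F j) * F a) ω ∂μ := by rw [← heq]
        _ = (∫ ω, (∏ j ∈ s, F j) ω ∂μ) * ∫ ω, F a ω ∂μ :=
            hIF.integral_mul_eq_mul_integral h1.aestronglyMeasurable (hi a).aestronglyMeasurable
        _ = ∏ i ∈ insert a s, ∫ ω, F i ω ∂μ := by
            rw [Finset.prod_insert ha, ← hprod, ih.2, mul_comm]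

lemma aux_tsum_pow (p : ℕ → ℝ≥0∞) : ∀ k : ℕ,
    ∑' v : Fin k → ℕ, ∏ m, p (v m) = (∑' j, p j) ^ k := by
  intro k; induction k with
  | zero =>
    rw [pow_zero]
    rw [tsum_eq_single (fun i => i.elim0) (fun b hb => absurd (Subsingleton.elim _ _) hb)]
    simp
  | succ n ih =>
    rw [← Equiv.tsum_eq (Fin.consEquiv (fun _ : Fin (n+1) => ℕ))]
    rw [ENNReal.tsum_prod']
    have hc : ∀ (a : ℕ) (v : Fin n → ℕ),
        (∏ m, p ((Fin.consEquiv (fun _ : Fin (n+1) => ℕ)) (a, v) m))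
          = p a * ∏ m, p (v m) := by
      intro a v
      rw [Fin.prod_univ_succ]
      simp [Fin.consEquiv]
    calc (∑' (a : ℕ) (v : Fin n → ℕ),
            ∏ m, p ((Fin.consEquiv (fun _ : Fin (n+1) => ℕ)) (a, v) m))
        = ∑' (a : ℕ), p a * ∑' (v : Fin n → ℕ), ∏ m, p (v m) := by
          congr 1; funext a
          rw [← ENNReal.tsum_mul_left]
          congr 1; funext v; exact hc a v
      _ = (∑' j, p j) ^ (n+1) := by
          rw [ENNReal.tsum_mul_right, ih, pow_succ, mul_comm]

lemma aux_ofReal_max (x : ℝ) : ENNReal.ofReal (max x 0) = ENNReal.ofReal x := by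
  rcases le_total x 0 with h | h
  · rw [max_eq_right h, ENNReal.ofReal_zero, eq_comm, ENNReal.ofReal_eq_zero]; exact h
  · rw [max_eq_left h]

lemma aux_tsum_real {ι : Type*} [Countable ι] (a : ι → ℝ)
    (h1 : ∑' i, ENNReal.ofReal (a i) ≠ ⊤) (h2 : ∑' i, ENNReal.ofReal (-a i) ≠ ⊤) :
    Summable a ∧ ∑' i, a i =
      (∑' i, ENNReal.ofReal (a i)).toReal - (∑' i, ENNReal.ofReal (-a i)).toReal := by
  have hpos : Summable (fun i => max (a i) 0) := by
    have := ENNReal.summable_toReal h1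
    simpa [ENNReal.toReal_ofReal'] using this
  have hneg : Summable (fun i => max (-a i) 0) := by
    have := ENNReal.summable_toReal h2
    simpa [ENNReal.toReal_ofReal'] using this
  have hdiff : (fun i => max (a i) 0 - max (-a i) 0) = a := by
    funext i; exact max_zero_sub_max_neg_zero_eq_self (a i)
  have hsum : Summable a := by
    rw [← hdiff]; exact hpos.sub hneg
  refine ⟨hsum, ?_⟩
  have e1 : ∑' i, ENNReal.ofReal (a i) = ENNReal.ofReal (∑' i, max (a i) 0) := by
    rw [ENNReal.ofReal_tsum_of_nonneg (fun i => le_max_right _ _) hpos]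
    exact tsum_congr fun i => (aux_ofReal_max (a i)).symm
  have e2 : ∑' i, ENNReal.ofReal (-a i) = ENNReal.ofReal (∑' i, max (-a i) 0) := by
    rw [ENNReal.ofReal_tsum_of_nonneg (fun i => le_max_right _ _) hneg]
    exact tsum_congr fun i => (aux_ofReal_max (-a i)).symm
  rw [e1, e2, ENNReal.toReal_ofReal (tsum_nonneg fun i => le_max_right _ _),
    ENNReal.toReal_ofReal (tsum_nonneg fun i => le_max_right _ _),
    ← Summable.tsum_sub hpos hneg]
  exact tsum_congr fun i => (max_zero_sub_max_neg_zero_eq_self (a i)).symm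

end AuxLemmas

/-- Per-node factor functions for the weighted branching process. -/
def wbpG (l : List ℕ) (φC φQ : ℝ → ℝ) : ∀ i : WbpIdx, wbpType i → ℝ
  | .inl p => fun x =>
      if p.length < l.length then (if l.getD p.length 0 < x.1 then (1:ℝ) else 0) else φQ x.2
  | .inr _ => fun x => φC x

lemma wbpG_meas (l : List ℕ) (φC φQ : ℝ → ℝ) (hφC : Measurable φC) (hφQ : Measurable φQ) :
    ∀ i : WbpIdx, @Measurable _ _ (wbpMS i) _ (wbpG l φC φQ i) := by
  intro i
  cases i with
  | inl p =>
    show Measurable fun x : ℕ × ℝ =>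
      if p.length < l.length then (if l.getD p.length 0 < x.1 then (1:ℝ) else 0) else φQ x.2
    split_ifs with h
    · exact Measurable.ite (measurableSet_lt measurable_const measurable_fst)
        measurable_const measurable_const
    · exact hφQ.comp measurable_snd
  | inr p =>
    show Measurable fun x : ℝ => φC x
    exact hφC


/-- If `E[N] < ∞`, `E[|Q|] < ∞` and `E[N]E[|C|] < 1`, then
`∑_k ∑_{i∈A_k} |Π_i||Q_i|` has finite expectation (in particular the series defining
`ℛ` converges absolutely a.s. and in L¹) and `E[ℛ] = E[Q]/(1 − E[N]E[C])`. -/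
theorem stmt_12 {Ω : Type*} [MeasureSpace Ω] [IsProbabilityMeasure (ℙ : Measure Ω)]
    (NQ : List ℕ → Ω → ℕ × ℝ) (Cw : List ℕ → Ω → ℝ)
    (hNQmeas : ∀ l, Measurable (NQ l)) (hCwmeas : ∀ l, Measurable (Cw l))
    (fam : ∀ i : WbpIdx, Ω → wbpType i)
    (hfaml : ∀ l, fam (.inl l) = NQ l)
    (hfamr : ∀ l : {l : List ℕ // l ≠ []}, fam (.inr l) = Cw l.1)
    (hindep : iIndepFun (m := wbpMS) fam ℙ)
    (hNQid : ∀ l, IdentDistrib (NQ l) (NQ []) ℙ ℙ)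
    (hCwid : ∀ l : List ℕ, l ≠ [] → IdentDistrib (Cw l) (Cw [0]) ℙ ℙ)
    (A : ℕ → Ω → Finset (List ℕ))
    (hA0 : ∀ ω, A 0 ω = {([] : List ℕ)})
    (hAs : ∀ k ω, A (k + 1) ω =
      (A k ω).biUnion fun i => (Finset.range (NQ i ω).1).image fun j => i ++ [j])
    (Pi : List ℕ → Ω → ℝ)
    (hPi0 : ∀ ω, Pi [] ω = 1)
    (hPis : ∀ (i : List ℕ) (j : ℕ) (ω : Ω), Pi (i ++ [j]) ω = Pi i ω * Cw (i ++ [j]) ω)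
    (R : Ω → ℝ)
    (hR : ∀ ω, R ω = ∑' k : ℕ, ∑ i ∈ A k ω, Pi i ω * (NQ i ω).2)
    (hNint : Integrable (fun ω => ((NQ [] ω).1 : ℝ)))
    (hCint : Integrable (Cw [0]))
    (hQint : Integrable (fun ω => (NQ [] ω).2))
    (hlt : (∫ ω, ((NQ [] ω).1 : ℝ)) * (∫ ω, |Cw [0] ω|) < 1) :
    (∫⁻ ω, ∑' k : ℕ, ∑ i ∈ A k ω, ENNReal.ofReal (|Pi i ω| * |(NQ i ω).2|)) < ⊤ ∧
    (∀ᵐ ω, Summable fun k : ℕ => ∑ i ∈ A k ω, |Pi i ω * (NQ i ω).2|) ∧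
    Integrable R ∧
    (∫ ω, R ω) = (∫ ω, (NQ [] ω).2) / (1 - (∫ ω, ((NQ [] ω).1 : ℝ)) * ∫ ω, Cw [0] ω) := by
  classical
  -- the prefix indicator
  set χ : List ℕ → Ω → ℝ := fun l ω =>
    ∏ m ∈ Finset.range l.length,
      (if l.getD m 0 < (NQ (l.take m) ω).1 then (1:ℝ) else 0) with hχdef
  have hχ01 : ∀ l ω, χ l ω = 0 ∨ χ l ω = 1 := by
    intro l ω
    by_cases h : ∀ m ∈ Finset.range l.length, l.getD m 0 < (NQ (l.take m) ω).1
    · right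
      exact Finset.prod_eq_one fun m hm => if_pos (h m hm)
    · left
      push_neg at h
      obtain ⟨m, hm, hcond⟩ := h
      exact Finset.prod_eq_zero hm (if_neg (not_lt.2 hcond))
  have hχnonneg : ∀ l ω, 0 ≤ χ l ω := by
    intro l ω; rcases hχ01 l ω with h | h <;> rw [h] <;> norm_num
  have hχapp : ∀ (l : List ℕ) (j : ℕ) (ω : Ω),
      χ (l ++ [j]) ω = χ l ω * (if j < (NQ l ω).1 then 1 else 0) := by
    intro l j ω
    have hlen : (l ++ [j]).length = l.length + 1 := by simp
    rw [hχdef]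
    simp only [hlen]
    rw [Finset.prod_range_succ]
    have hlast : (if (l ++ [j]).getD l.length 0 < (NQ ((l ++ [j]).take l.length) ω).1
        then (1:ℝ) else 0) = (if j < (NQ l ω).1 then 1 else 0) := by
      have h1 : (l ++ [j]).getD l.length 0 = j := by
        rw [List.getD_append_right _ _ _ _ (le_refl _), Nat.sub_self]
        rfl
      have h2 : (l ++ [j]).take l.length = l := List.take_left' rfl
      rw [h1, h2]
    rw [hlast]
    congr 1
    apply Finset.prod_congr rfl
    intro m hm
    rw [Finset.mem_range] at hm
    have h1 : (l ++ [j]).getD m 0 = l.getD m 0 := List.getD_append _ _ _ _ hm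
    have h2 : (l ++ [j]).take m = l.take m := by
      rw [List.take_append, Nat.sub_eq_zero_of_le hm.le]
      simp
    rw [h1, h2]
  have hmem : ∀ (k : ℕ) (l : List ℕ) (ω : Ω),
      l ∈ A k ω ↔ (l.length = k ∧ χ l ω = 1) := by
    intro k
    induction k with
    | zero =>
      intro l ω
      rw [hA0, Finset.mem_singleton]
      constructor
      · rintro rfl
        refine ⟨rfl, ?_⟩
        simp [hχdef]
      · rintro ⟨hlen, -⟩
        exact List.length_eq_zero_iff.1 hlen
    | succ k ih =>
      intro l ω
      rw [hAs]
      simp only [Finset.mem_biUnion, Finset.mem_image, Finset.mem_range]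
      constructor
      · rintro ⟨i, hi, j, hj, rfl⟩
        obtain ⟨hilen, hiχ⟩ := (ih i ω).1 hi
        refine ⟨by simp [hilen], ?_⟩
        rw [hχapp, hiχ, if_pos hj, one_mul]
      · rintro ⟨hlen, hχ1⟩
        have hlne : l ≠ [] := by
          intro h; rw [h] at hlen; simp at hlen
        set i := l.dropLast with hidef
        set j := l.getLast hlne with hjdef
        have hl : i ++ [j] = l := List.dropLast_append_getLast hlne
        have hilen : i.length = k := by
          have h1 : i.length = l.length - 1 := by rw [hidef, List.length_dropLast]
          omega
        rw [← hl, hχapp] at hχ1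
        have hiχ : χ i ω = 1 := by
          rcases hχ01 i ω with h0 | h1
          · rw [h0, zero_mul] at hχ1; norm_num at hχ1
          · exact h1
        have hj1 : j < (NQ i ω).1 := by
          by_contra hc
          rw [if_neg hc, mul_zero] at hχ1
          norm_num at hχ1
        exact ⟨i, (ih i ω).2 ⟨hilen, hiχ⟩, j, hj1, hl⟩
  have hPiprod : ∀ (l : List ℕ) (ω : Ω),
      Pi l ω = ∏ m ∈ Finset.range l.length, Cw (l.take (m+1)) ω := by
    intro l
    induction l using List.reverseRecOn with
    | nil => intro ω; simp [hPi0]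
    | append_singleton l j ih =>
      intro ω
      rw [hPis, ih]
      have hlen : (l ++ [j]).length = l.length + 1 := by simp
      rw [hlen, Finset.prod_range_succ]
      have hlast : (l ++ [j]).take (l.length + 1) = l ++ [j] :=
        List.take_of_length_le (by simp)
      rw [hlast]
      congr 1
      apply Finset.prod_congr rfl
      intro m hm
      rw [Finset.mem_range] at hm
      have h2 : (l ++ [j]).take (m+1) = l.take (m+1) := by
        rw [List.take_append, Nat.sub_eq_zero_of_le (by omega)]
        simp
      rw [h2]
  have hχmeas : ∀ l, Measurable (χ l) := by
    intro l
    rw [hχdef]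
    apply Finset.measurable_prod
    intro m _
    exact Measurable.ite
      ((hNQmeas (l.take m)) (measurableSet_lt measurable_const measurable_fst))
      measurable_const measurable_const

  have hfammeas : ∀ i : WbpIdx, @Measurable Ω (wbpType i) _ (wbpMS i) (fam i) := by
    intro i
    cases i with
    | inl p => rw [hfaml]; exact hNQmeas p
    | inr p => rw [hfamr]; exact hCwmeas p.1
  have key : ∀ (φC φQ : ℝ → ℝ), Measurable φC → Measurable φQ →
      Integrable (fun ω => φC (Cw [0] ω)) → Integrable (fun ω => φQ ((NQ [] ω).2)) →
      ∀ l : List ℕ,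
        Integrable (fun ω => χ l ω * (∏ m ∈ Finset.range l.length, φC (Cw (l.take (m+1)) ω))
            * φQ ((NQ l ω).2)) ∧
        ∫ ω, χ l ω * (∏ m ∈ Finset.range l.length, φC (Cw (l.take (m+1)) ω)) * φQ ((NQ l ω).2)
          = (∏ m ∈ Finset.range l.length, (ℙ {ω | l.getD m 0 < (NQ [] ω).1}).toReal)
              * (∫ ω, φC (Cw [0] ω)) ^ l.length * ∫ ω, φQ ((NQ [] ω).2) := by
    intro φC φQ hφC hφQ hφCint hφQint l
    set G : WbpIdx → Ω → ℝ := fun i ω => wbpG l φC φQ i (fam i ω) with hGdef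
    have hGindep : iIndepFun (m := fun _ => (inferInstance : MeasurableSpace ℝ)) G ℙ :=
      hindep.comp _ (wbpG_meas l φC φQ hφC hφQ)
    have hGmeas : ∀ i, Measurable (G i) := fun i =>
      ((wbpG_meas l φC φQ hφC hφQ) i).comp (hfammeas i)
    have hlpos : ∀ m : Fin l.length, l.take ((m:ℕ)+1) ≠ [] := by
      intro m h
      rcases List.take_eq_nil_iff.1 h with h1 | h1
      · omega
      · have hl0 : l.length = 0 := by rw [h1]; rfl
        have hm2 := m.2; omega
    set u : (Fin (l.length+1)) ⊕ (Fin l.length) → WbpIdx := fun x =>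
      Sum.elim (fun m : Fin (l.length+1) => Sum.inl (l.take (m:ℕ)))
        (fun m : Fin l.length => Sum.inr ⟨l.take ((m:ℕ)+1), hlpos m⟩) x with hudef
    have humem : ∀ m : Fin (l.length+1), u (Sum.inl m) = Sum.inl (l.take (m:ℕ)) := fun m => rfl
    have humem' : ∀ m : Fin l.length,
        u (Sum.inr m) = Sum.inr ⟨l.take ((m:ℕ)+1), hlpos m⟩ := fun m => rfl
    have hu : Function.Injective u := by
      intro x y hxy
      match x, y with
      | Sum.inl m, Sum.inl m' =>
        rw [humem m, humem m'] at hxy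
        have h0 : l.take (m:ℕ) = l.take (m':ℕ) := by injection hxy
        have h1 : (l.take (m:ℕ)).length = (l.take (m':ℕ)).length := by rw [h0]
        rw [List.length_take, List.length_take] at h1
        have hm := m.2; have hm' := m'.2
        have : (m:ℕ) = (m':ℕ) := by omega
        exact congrArg Sum.inl (Fin.ext this)
      | Sum.inr m, Sum.inr m' =>
        rw [humem' m, humem' m'] at hxy
        have h0 : (⟨l.take ((m:ℕ)+1), hlpos m⟩ : {l : List ℕ // l ≠ []})
            = ⟨l.take ((m':ℕ)+1), hlpos m'⟩ := by injection hxy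
        have h0' : l.take ((m:ℕ)+1) = l.take ((m':ℕ)+1) := congrArg Subtype.val h0
        have h1 : (l.take ((m:ℕ)+1)).length = (l.take ((m':ℕ)+1)).length := by rw [h0']
        rw [List.length_take, List.length_take] at h1
        have hm := m.2; have hm' := m'.2
        have : (m:ℕ) = (m':ℕ) := by omega
        exact congrArg Sum.inr (Fin.ext this)
      | Sum.inl m, Sum.inr m' =>
        rw [humem m, humem' m'] at hxy
        exact (Sum.inl_ne_inr hxy).elim
      | Sum.inr m, Sum.inl m' =>
        rw [humem' m, humem m'] at hxy
        exact (Sum.inr_ne_inl hxy).elim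
    have hGu := aux_precomp u hu hGindep
    have hGum : ∀ x, Measurable (fun ω => G (u x) ω) := fun x => hGmeas (u x)
    -- pointwise evaluation of the factors
    have hinl : ∀ (m : ℕ), m < l.length → ∀ ω, G (Sum.inl (l.take m)) ω
        = (if l.getD m 0 < (NQ (l.take m) ω).1 then (1:ℝ) else 0) := by
      intro m hm ω
      rw [hGdef]
      show wbpG l φC φQ (Sum.inl (l.take m)) (fam (Sum.inl (l.take m)) ω) = _
      rw [hfaml]
      show (if (l.take m).length < l.length
          then (if l.getD (l.take m).length 0 < (NQ (l.take m) ω).1 then (1:ℝ) else 0)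
          else φQ ((NQ (l.take m) ω)).2) = _
      have hlen : (l.take m).length = m := by rw [List.length_take]; omega
      rw [hlen, if_pos hm]
    have hinl_last : ∀ ω, G (Sum.inl l) ω = φQ ((NQ l ω).2) := by
      intro ω
      rw [hGdef]
      show wbpG l φC φQ (Sum.inl l) (fam (Sum.inl l) ω) = _
      rw [hfaml]
      show (if l.length < l.length
          then (if l.getD l.length 0 < (NQ l ω).1 then (1:ℝ) else 0)
          else φQ ((NQ l ω)).2) = _
      rw [if_neg (lt_irrefl _)]
    have hinr : ∀ (p : List ℕ) (hp : p ≠ []), ∀ ω,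
        G (Sum.inr ⟨p, hp⟩) ω = φC (Cw p ω) := by
      intro p hp ω
      rw [hGdef]
      show wbpG l φC φQ (Sum.inr ⟨p, hp⟩) (fam (Sum.inr ⟨p, hp⟩) ω) = _
      rw [hfamr]
      rfl
    have htakelast : l.take l.length = l := List.take_length
    -- integrability of the factors
    have hGuint : ∀ x, Integrable (fun ω => G (u x) ω) := by
      intro x
      match x with
      | Sum.inl m =>
        by_cases hm : (m:ℕ) < l.length
        · have heq : (fun ω => G (u (Sum.inl m)) ω)
              = fun ω => Set.indicator (NQ (l.take (m:ℕ)) ⁻¹' {x : ℕ × ℝ | l.getD (m:ℕ) 0 < x.1})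
                  (fun _ => (1:ℝ)) ω := by
            funext ω
            rw [humem m, hinl (m:ℕ) hm ω, Set.indicator_apply]
            simp only [Set.mem_preimage, Set.mem_setOf_eq]
          rw [heq]
          exact (integrable_const (1:ℝ)).indicator
            ((hNQmeas _) (measurableSet_lt measurable_const measurable_fst))
        · have hm' : (m:ℕ) = l.length := by have := m.2; omega
          have heq : (fun ω => G (u (Sum.inl m)) ω) = fun ω => φQ ((NQ l ω).2) := by
            funext ω
            rw [humem m, hm', htakelast, hinl_last ω]
          rw [heq]
          exact ((hNQid l).comp (hφQ.comp measurable_snd)).integrable_iff.2 hφQint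
      | Sum.inr m =>
        have heq : (fun ω => G (u (Sum.inr m)) ω) = fun ω => φC (Cw (l.take ((m:ℕ)+1)) ω) := by
          funext ω
          rw [humem' m, hinr _ (hlpos m) ω]
        rw [heq]
        exact ((hCwid _ (hlpos m)).comp hφC).integrable_iff.2 hφCint
    obtain ⟨hint, hval⟩ := aux_prod_integral hGu hGum hGuint Finset.univ
    -- pointwise product identity
    have hpoint : ∀ ω, (∏ x, G (u x) ω)
        = χ l ω * (∏ m ∈ Finset.range l.length, φC (Cw (l.take (m+1)) ω))
            * φQ ((NQ l ω).2) := by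
      intro ω
      rw [Fintype.prod_sum_type]
      have h1 : ∏ m : Fin (l.length+1), G (u (Sum.inl m)) ω = χ l ω * φQ ((NQ l ω).2) := by
        rw [Fin.prod_univ_castSucc]
        congr 1
        · simp only [hχdef]
          rw [Finset.prod_range]
          apply Finset.prod_congr rfl
          intro m _
          rw [humem m.castSucc]
          simp only [Fin.coe_castSucc]
          exact hinl (m:ℕ) m.2 ω
        · rw [humem (Fin.last l.length)]
          simp only [Fin.val_last]
          rw [htakelast]
          exact hinl_last ω
      have h2 : ∏ m : Fin l.length, G (u (Sum.inr m)) ω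
          = ∏ m ∈ Finset.range l.length, φC (Cw (l.take (m+1)) ω) := by
        rw [Finset.prod_range]
        apply Finset.prod_congr rfl
        intro m _
        rw [humem' m]
        exact hinr _ (hlpos m) ω
      rw [h1, h2]; ring
    -- values of the integrals of the factors
    have hvals : (∏ x, ∫ ω, G (u x) ω)
        = (∏ m ∈ Finset.range l.length, (ℙ {ω | l.getD m 0 < (NQ [] ω).1}).toReal)
            * (∫ ω, φC (Cw [0] ω)) ^ l.length * ∫ ω, φQ ((NQ [] ω).2) := by
      rw [Fintype.prod_sum_type]
      have h1 : ∏ m : Fin (l.length+1), ∫ ω, G (u (Sum.inl m)) ω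
          = (∏ m ∈ Finset.range l.length, (ℙ {ω | l.getD m 0 < (NQ [] ω).1}).toReal)
              * ∫ ω, φQ ((NQ [] ω).2) := by
        rw [Fin.prod_univ_castSucc]
        congr 1
        · rw [Finset.prod_range]
          apply Finset.prod_congr rfl
          intro m _
          have heq : (fun ω => G (u (Sum.inl m.castSucc)) ω)
              = fun ω => Set.indicator (NQ (l.take (m:ℕ)) ⁻¹' {x : ℕ × ℝ | l.getD (m:ℕ) 0 < x.1})
                  (fun _ => (1:ℝ)) ω := by
            funext ω
            rw [humem m.castSucc]
            simp only [Fin.coe_castSucc]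
            rw [hinl (m:ℕ) m.2 ω, Set.indicator_apply]
            simp only [Set.mem_preimage, Set.mem_setOf_eq]
          calc ∫ ω, G (u (Sum.inl m.castSucc)) ω
              = ∫ ω, Set.indicator (NQ (l.take (m:ℕ)) ⁻¹' {x : ℕ × ℝ | l.getD (m:ℕ) 0 < x.1})
                  (fun _ => (1:ℝ)) ω := by rw [heq]
            _ = (ℙ (NQ (l.take (m:ℕ)) ⁻¹' {x : ℕ × ℝ | l.getD (m:ℕ) 0 < x.1})).toReal
                  • (1:ℝ) := integral_indicator_const (1:ℝ)
                    ((hNQmeas _) (measurableSet_lt measurable_const measurable_fst))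
            _ = (ℙ {ω | l.getD (m:ℕ) 0 < (NQ [] ω).1}).toReal := by
                rw [(hNQid (l.take (m:ℕ))).measure_mem_eq
                  (measurableSet_lt measurable_const measurable_fst)]
                rw [smul_eq_mul, mul_one]
                rfl
        · have heq : (fun ω => G (u (Sum.inl (Fin.last l.length))) ω)
              = fun ω => φQ ((NQ l ω).2) := by
            funext ω
            rw [humem (Fin.last l.length)]
            simp only [Fin.val_last]
            rw [htakelast]
            exact hinl_last ω
          calc ∫ ω, G (u (Sum.inl (Fin.last l.length))) ω
              = ∫ ω, φQ ((NQ l ω).2) := by rw [heq]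
            _ = ∫ ω, φQ ((NQ [] ω).2) :=
                ((hNQid l).comp (hφQ.comp measurable_snd)).integral_eq
      have h2 : ∏ m : Fin l.length, ∫ ω, G (u (Sum.inr m)) ω
          = (∫ ω, φC (Cw [0] ω)) ^ l.length := by
        have hc : ∀ m : Fin l.length, ∫ ω, G (u (Sum.inr m)) ω = ∫ ω, φC (Cw [0] ω) := by
          intro m
          have heq : (fun ω => G (u (Sum.inr m)) ω)
              = fun ω => φC (Cw (l.take ((m:ℕ)+1)) ω) := by
            funext ω
            rw [humem' m]
            exact hinr _ (hlpos m) ω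
          calc ∫ ω, G (u (Sum.inr m)) ω
              = ∫ ω, φC (Cw (l.take ((m:ℕ)+1)) ω) := by rw [heq]
            _ = ∫ ω, φC (Cw [0] ω) := ((hCwid _ (hlpos m)).comp hφC).integral_eq
        rw [Finset.prod_congr rfl (fun m _ => hc m), Finset.prod_const, Finset.card_univ,
          Fintype.card_fin]
      rw [h1, h2]; ring
    have hTpoint : (fun ω => χ l ω * (∏ m ∈ Finset.range l.length, φC (Cw (l.take (m+1)) ω))
        * φQ ((NQ l ω).2)) = fun ω => ∏ x, G (u x) ω := by
      funext ω; rw [hpoint ω]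
    constructor
    · rw [hTpoint]; exact hint
    · calc ∫ ω, χ l ω * (∏ m ∈ Finset.range l.length, φC (Cw (l.take (m+1)) ω))
            * φQ ((NQ l ω).2)
          = ∫ ω, ∏ x, G (u x) ω := by rw [hTpoint]
        _ = ∏ x, ∫ ω, G (u x) ω := hval
        _ = _ := hvals

  -- abbreviations
  set pN : ℕ → ℝ := fun c => (ℙ {ω | c < (NQ [] ω).1}).toReal with hpNdef
  set P : List ℕ → ℝ := fun l => ∏ m ∈ Finset.range l.length, pN (l.getD m 0) with hPdef
  set bE : ℝ := ∫ ω, |Cw [0] ω| with hbEdef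
  set qE : ℝ := ∫ ω, |(NQ [] ω).2| with hqEdef
  set cI : ℝ := ∫ ω, Cw [0] ω with hcIdef
  set qI : ℝ := ∫ ω, (NQ [] ω).2 with hqIdef
  set nI : ℝ := ∫ ω, ((NQ [] ω).1 : ℝ) with hnIdef
  have hpN_nonneg : ∀ c, 0 ≤ pN c := fun c => ENNReal.toReal_nonneg
  have hP_nonneg : ∀ l, 0 ≤ P l := fun l => Finset.prod_nonneg fun m _ => hpN_nonneg _
  have hbE_nonneg : 0 ≤ bE := integral_nonneg fun ω => abs_nonneg _
  have hqE_nonneg : 0 ≤ qE := integral_nonneg fun ω => abs_nonneg _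
  have hnI_nonneg : 0 ≤ nI := integral_nonneg fun ω => Nat.cast_nonneg _
  set Tabs : List ℕ → Ω → ℝ := fun l ω =>
    χ l ω * (∏ m ∈ Finset.range l.length, |Cw (l.take (m+1)) ω|) * |(NQ l ω).2| with hTabsdef
  set Tsgn : List ℕ → Ω → ℝ := fun l ω =>
    χ l ω * (∏ m ∈ Finset.range l.length, Cw (l.take (m+1)) ω) * (NQ l ω).2 with hTsgndef
  have habs : ∀ l : List ℕ, Integrable (Tabs l) ∧
      ∫ ω, Tabs l ω = P l * bE ^ l.length * qE :=
    key (fun x => |x|) (fun x => |x|) continuous_abs.measurable continuous_abs.measurable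
      hCint.abs hQint.abs
  have hsgn : ∀ l : List ℕ, Integrable (Tsgn l) ∧
      ∫ ω, Tsgn l ω = P l * cI ^ l.length * qI :=
    key (fun x => x) (fun x => x) measurable_id measurable_id hCint hQint
  have hTabs_nonneg : ∀ l ω, 0 ≤ Tabs l ω := fun l ω =>
    mul_nonneg (mul_nonneg (hχnonneg l ω) (Finset.prod_nonneg fun m _ => abs_nonneg _))
      (abs_nonneg _)
  have habs_sgn : ∀ l ω, |Tsgn l ω| = Tabs l ω := by
    intro l ω
    rw [hTsgndef, hTabsdef]
    simp only [abs_mul, Finset.abs_prod, abs_of_nonneg (hχnonneg l ω)]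
  have hTabs_meas : ∀ l, Measurable (Tabs l) := by
    intro l
    rw [hTabsdef]
    exact ((hχmeas l).mul
      (Finset.measurable_prod _ fun m _ => (hCwmeas _).abs)).mul
      ((measurable_snd.comp (hNQmeas l)).abs)
  have hTsgn_meas : ∀ l, Measurable (Tsgn l) := by
    intro l
    rw [hTsgndef]
    exact ((hχmeas l).mul
      (Finset.measurable_prod _ fun m _ => hCwmeas _)).mul
      (measurable_snd.comp (hNQmeas l))
  -- representation of the generation sums as tsums over all lists
  have hreprAbs : ∀ (k : ℕ) (ω : Ω),
      (∑ i ∈ A k ω, ENNReal.ofReal (|Pi i ω| * |(NQ i ω).2|))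
        = ∑' l : List ℕ, (if l.length = k then ENNReal.ofReal (Tabs l ω) else 0) := by
    intro k ω
    have hz : ∀ l ∉ A k ω, (if l.length = k then ENNReal.ofReal (Tabs l ω) else 0) = 0 := by
      intro l hl
      by_cases hlen : l.length = k
      · rw [if_pos hlen]
        have hχ0 : χ l ω = 0 := by
          rcases hχ01 l ω with h0 | h1
          · exact h0
          · exact absurd ((hmem k l ω).2 ⟨hlen, h1⟩) hl
        rw [hTabsdef]
        simp [hχ0]
      · rw [if_neg hlen]
    rw [tsum_eq_sum hz]
    apply Finset.sum_congr rfl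
    intro l hl
    obtain ⟨hlen, hχ1⟩ := (hmem k l ω).1 hl
    rw [if_pos hlen]
    congr 1
    rw [hTabsdef]
    simp only [hχ1, one_mul]
    rw [hPiprod l ω, Finset.abs_prod]
  have hreprSgn : ∀ (k : ℕ) (ω : Ω),
      (∑ i ∈ A k ω, Pi i ω * (NQ i ω).2)
        = ∑' l : List ℕ, (if l.length = k then Tsgn l ω else 0) := by
    intro k ω
    have hz : ∀ l ∉ A k ω, (if l.length = k then Tsgn l ω else 0) = 0 := by
      intro l hl
      by_cases hlen : l.length = k
      · rw [if_pos hlen]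
        have hχ0 : χ l ω = 0 := by
          rcases hχ01 l ω with h0 | h1
          · exact h0
          · exact absurd ((hmem k l ω).2 ⟨hlen, h1⟩) hl
        rw [hTsgndef]
        simp [hχ0]
      · rw [if_neg hlen]
    rw [tsum_eq_sum hz]
    apply Finset.sum_congr rfl
    intro l hl
    obtain ⟨hlen, hχ1⟩ := (hmem k l ω).1 hl
    rw [if_pos hlen]
    rw [hTsgndef]
    simp only [hχ1, one_mul]
    rw [hPiprod l ω]
  -- sum of the probabilities pN equals E[N]
  have hNmeasSet : ∀ c : ℕ, MeasurableSet {ω | c < (NQ [] ω).1} :=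
    fun c => (hNQmeas []) (measurableSet_lt measurable_const measurable_fst)
  have hsumpN : (∑' c : ℕ, ENNReal.ofReal (pN c)) = ENNReal.ofReal nI := by
    have h1 : ∀ c : ℕ, ENNReal.ofReal (pN c) = ℙ {ω | c < (NQ [] ω).1} := by
      intro c; rw [hpNdef]; exact ENNReal.ofReal_toReal (measure_ne_top _ _)
    calc ∑' c : ℕ, ENNReal.ofReal (pN c)
        = ∑' c : ℕ, ℙ {ω | c < (NQ [] ω).1} := tsum_congr h1
      _ = ∑' c : ℕ, ∫⁻ ω, Set.indicator {ω | c < (NQ [] ω).1} (fun _ => (1:ℝ≥0∞)) ω :=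
          tsum_congr fun c => (lintegral_indicator_one (hNmeasSet c)).symm
      _ = ∫⁻ ω, ∑' c : ℕ, Set.indicator {ω | c < (NQ [] ω).1} (fun _ => (1:ℝ≥0∞)) ω :=
          (lintegral_tsum fun c =>
            ((measurable_const.indicator (hNmeasSet c)).aemeasurable)).symm
      _ = ∫⁻ ω, ((NQ [] ω).1 : ℝ≥0∞) := by
          apply lintegral_congr
          intro ω
          have h2 : ∀ c : ℕ, Set.indicator {ω | c < (NQ [] ω).1} (fun _ => (1:ℝ≥0∞)) ω
              = (if c < (NQ [] ω).1 then (1:ℝ≥0∞) else 0) := by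
            intro c; simp [Set.indicator_apply]
          rw [tsum_congr h2]
          rw [tsum_eq_sum (s := Finset.range (NQ [] ω).1)
            (fun c hc => if_neg (by simpa using hc))]
          rw [Finset.sum_congr rfl (fun c hc => if_pos (Finset.mem_range.1 hc))]
          simp
      _ = ∫⁻ ω, ENNReal.ofReal (((NQ [] ω).1 : ℝ)) :=
          lintegral_congr fun ω => (ENNReal.ofReal_natCast _).symm
      _ = ENNReal.ofReal nI :=
          (ofReal_integral_eq_lintegral_ofReal hNint
            (Filter.Eventually.of_forall fun ω => Nat.cast_nonneg _)).symm
  -- the tsum over lists of fixed length of the probability products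
  have hW : ∀ k : ℕ, (∑' l : List ℕ, (if l.length = k then ENNReal.ofReal (P l) else 0))
      = (ENNReal.ofReal nI) ^ k := by
    intro k
    have e := (List.equivSigmaTuple (α := ℕ)).symm
    rw [← Equiv.tsum_eq (List.equivSigmaTuple (α := ℕ)).symm
      (fun l => if l.length = k then ENNReal.ofReal (P l) else 0)]
    rw [ENNReal.tsum_sigma']
    rw [tsum_eq_single k ?_]
    · have hofFn : ∀ v : Fin k → ℕ,
          (List.equivSigmaTuple (α := ℕ)).symm ⟨k, v⟩ = List.ofFn v := fun v => rfl
      calc ∑' v : Fin k → ℕ,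
            (if ((List.equivSigmaTuple (α := ℕ)).symm ⟨k, v⟩).length = k
              then ENNReal.ofReal (P ((List.equivSigmaTuple (α := ℕ)).symm ⟨k, v⟩)) else 0)
          = ∑' v : Fin k → ℕ, ∏ m : Fin k, ENNReal.ofReal (pN (v m)) := by
            apply tsum_congr
            intro v
            rw [hofFn v, if_pos (by simp)]
            rw [hPdef]
            simp only [List.length_ofFn]
            rw [ENNReal.ofReal_prod_of_nonneg (fun m _ => hpN_nonneg _)]
            rw [Finset.prod_range]
            apply Finset.prod_congr rfl
            intro m _
            congr 1
            rw [List.getD_eq_getElem _ _ (by simp [m.2]), List.getElem_ofFn]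
        _ = (∑' c : ℕ, ENNReal.ofReal (pN c)) ^ k := aux_tsum_pow (fun j => ENNReal.ofReal (pN j)) k
        _ = (ENNReal.ofReal nI) ^ k := by rw [hsumpN]
    · intro n hn
      have : ∀ v : Fin n → ℕ,
          (if ((List.equivSigmaTuple (α := ℕ)).symm ⟨n, v⟩).length = k
            then ENNReal.ofReal (P ((List.equivSigmaTuple (α := ℕ)).symm ⟨n, v⟩)) else 0) = 0 := by
        intro v
        rw [if_neg (by simpa using hn)]
      rw [tsum_congr this, tsum_zero]
  set ρ : ℝ≥0∞ := ENNReal.ofReal (nI * bE) with hρdef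
  have hρ1 : ρ < 1 := by rw [hρdef]; exact ENNReal.ofReal_lt_one.2 hlt
  -- per-node lintegral sums
  have hnodeSum : ∀ k : ℕ,
      (∑' l : List ℕ, ∫⁻ ω, (if l.length = k then ENNReal.ofReal (Tabs l ω) else 0))
        = ρ ^ k * ENNReal.ofReal qE := by
    intro k
    have hper : ∀ l : List ℕ,
        (∫⁻ ω, (if l.length = k then ENNReal.ofReal (Tabs l ω) else 0))
          = (if l.length = k then ENNReal.ofReal (P l) else 0)
              * ENNReal.ofReal (bE ^ k * qE) := by
      intro l
      by_cases hlen : l.length = k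
      · simp only [if_pos hlen]
        rw [← ofReal_integral_eq_lintegral_ofReal (habs l).1
          (Filter.Eventually.of_forall (hTabs_nonneg l))]
        rw [(habs l).2, hlen]
        rw [← ENNReal.ofReal_mul (hP_nonneg l), mul_assoc]
      · simp only [if_neg hlen, lintegral_zero, zero_mul]
    rw [tsum_congr hper, ENNReal.tsum_mul_right, hW k]
    rw [hρdef, ENNReal.ofReal_mul hnI_nonneg,
      ENNReal.ofReal_mul (pow_nonneg hbE_nonneg k), ENNReal.ofReal_pow hbE_nonneg]
    ring
  -- level lintegral values
  have hlevelAbs : ∀ k : ℕ,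
      (∫⁻ ω, ∑ i ∈ A k ω, ENNReal.ofReal (|Pi i ω| * |(NQ i ω).2|))
        = ρ ^ k * ENNReal.ofReal qE := by
    intro k
    rw [lintegral_congr (hreprAbs k)]
    rw [lintegral_tsum (fun l => ?_)]
    · exact hnodeSum k
    · by_cases hlen : l.length = k
      · simp only [if_pos hlen]
        exact ((hTabs_meas l).ennreal_ofReal).aemeasurable
      · simp only [if_neg hlen]
        exact aemeasurable_const

  -- real version of hW
  have hWreal : ∀ k : ℕ, Summable (fun l : List ℕ => if l.length = k then P l else 0) ∧
      (∑' l : List ℕ, (if l.length = k then P l else 0)) = nI ^ k := by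
    intro k
    have hnn : ∀ l : List ℕ, 0 ≤ (if l.length = k then P l else 0) := by
      intro l; split_ifs; exacts [hP_nonneg _, le_rfl]
    have hof : ∀ l : List ℕ, ENNReal.ofReal (if l.length = k then P l else 0)
        = (if l.length = k then ENNReal.ofReal (P l) else 0) := by
      intro l; split_ifs <;> simp
    have hne : (∑' l : List ℕ, ENNReal.ofReal (if l.length = k then P l else 0)) ≠ ⊤ := by
      rw [tsum_congr hof, hW k]
      exact ENNReal.pow_ne_top ENNReal.ofReal_ne_top
    have hsummable : Summable (fun l : List ℕ => if l.length = k then P l else 0) := by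
      have h2 := ENNReal.summable_toReal hne
      have heq : (fun l : List ℕ =>
          (ENNReal.ofReal (if l.length = k then P l else 0)).toReal)
          = fun l : List ℕ => if l.length = k then P l else 0 :=
        funext fun l => ENNReal.toReal_ofReal (hnn l)
      rwa [heq] at h2
    refine ⟨hsummable, ?_⟩
    have h3 : ENNReal.ofReal (∑' l : List ℕ, (if l.length = k then P l else 0))
        = ENNReal.ofReal (nI ^ k) := by
      rw [ENNReal.ofReal_tsum_of_nonneg hnn hsummable, tsum_congr hof, hW k,
        ENNReal.ofReal_pow hnI_nonneg]
    exact (ENNReal.ofReal_eq_ofReal_iff (tsum_nonneg hnn) (pow_nonneg hnI_nonneg k)).1 h3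
  -- level integral values (signed version)
  have hmeasNode : ∀ (k : ℕ) (l : List ℕ),
      AEStronglyMeasurable (fun ω => (if l.length = k then Tsgn l ω else 0)) ℙ := by
    intro k l
    by_cases hlen : l.length = k
    · simp only [if_pos hlen]; exact (hTsgn_meas l).aestronglyMeasurable
    · simp only [if_neg hlen]; exact aestronglyMeasurable_const
  have hnormNode : ∀ (k : ℕ) (l : List ℕ) (ω : Ω),
      ((‖if l.length = k then Tsgn l ω else 0‖₊ : ℝ≥0∞))
        = (if l.length = k then ENNReal.ofReal (Tabs l ω) else 0) := by
    intro k l ω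
    split_ifs with h
    · rw [← enorm_eq_nnnorm, Real.enorm_eq_ofReal_abs, habs_sgn l ω]
    · simp
  have hfinNode : ∀ k : ℕ,
      (∑' l : List ℕ, ∫⁻ ω, ((‖if l.length = k then Tsgn l ω else 0‖₊ : ℝ≥0∞))) ≠ ⊤ := by
    intro k
    have hc : ∀ l : List ℕ, (∫⁻ ω, ((‖if l.length = k then Tsgn l ω else 0‖₊ : ℝ≥0∞)))
        = ∫⁻ ω, (if l.length = k then ENNReal.ofReal (Tabs l ω) else 0) :=
      fun l => lintegral_congr fun ω => hnormNode k l ω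
    rw [tsum_congr hc, hnodeSum k]
    exact (ENNReal.mul_lt_top (ENNReal.pow_lt_top (lt_of_lt_of_le hρ1 le_top))
      ENNReal.ofReal_lt_top).ne
  have hlevelSgn : ∀ k : ℕ,
      (∫ ω, ∑ i ∈ A k ω, Pi i ω * (NQ i ω).2) = (nI * cI) ^ k * qI := by
    intro k
    have hrw : (fun ω => ∑ i ∈ A k ω, Pi i ω * (NQ i ω).2)
        = fun ω => ∑' l : List ℕ, (if l.length = k then Tsgn l ω else 0) :=
      funext fun ω => hreprSgn k ω
    rw [hrw, integral_tsum (fun l => hmeasNode k l) (hfinNode k)]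
    have hint_val : ∀ l : List ℕ, (∫ ω, (if l.length = k then Tsgn l ω else 0))
        = (if l.length = k then P l else 0) * (cI ^ k * qI) := by
      intro l
      by_cases h : l.length = k
      · simp only [if_pos h]
        rw [(hsgn l).2, h]
        ring
      · simp only [if_neg h, integral_zero, zero_mul]
    rw [tsum_congr hint_val, tsum_mul_right, (hWreal k).2, mul_pow]
    ring
  -- Part 1
  have hmeasLevel : ∀ k : ℕ, AEMeasurable (fun ω => ∑ i ∈ A k ω,
      ENNReal.ofReal (|Pi i ω| * |(NQ i ω).2|)) ℙ := by
    intro k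
    have hrw : (fun ω => ∑ i ∈ A k ω, ENNReal.ofReal (|Pi i ω| * |(NQ i ω).2|))
        = fun ω => ∑' l : List ℕ, (if l.length = k then ENNReal.ofReal (Tabs l ω) else 0) :=
      funext fun ω => hreprAbs k ω
    rw [hrw]
    apply Measurable.aemeasurable
    apply Measurable.ennreal_tsum
    intro l
    by_cases hlen : l.length = k
    · simp only [if_pos hlen]; exact (hTabs_meas l).ennreal_ofReal
    · simp only [if_neg hlen]; exact measurable_const
  have htotal : (∫⁻ ω, ∑' k : ℕ, ∑ i ∈ A k ω, ENNReal.ofReal (|Pi i ω| * |(NQ i ω).2|))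
      = (1 - ρ)⁻¹ * ENNReal.ofReal qE := by
    rw [lintegral_tsum hmeasLevel, tsum_congr hlevelAbs, ENNReal.tsum_mul_right,
      ENNReal.tsum_geometric]
  have hfin1 : (∫⁻ ω, ∑' k : ℕ, ∑ i ∈ A k ω, ENNReal.ofReal (|Pi i ω| * |(NQ i ω).2|)) < ⊤ := by
    rw [htotal]
    exact ENNReal.mul_lt_top (ENNReal.inv_lt_top.2 (tsub_pos_iff_lt.2 hρ1))
      ENNReal.ofReal_lt_top
  -- a.e. finiteness
  have hmtot : Measurable (fun ω => ∑' k : ℕ, ∑ i ∈ A k ω,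
      ENNReal.ofReal (|Pi i ω| * |(NQ i ω).2|)) := by
    have hrwtot : (fun ω => ∑' k : ℕ, ∑ i ∈ A k ω, ENNReal.ofReal (|Pi i ω| * |(NQ i ω).2|))
        = fun ω => ∑' k : ℕ, ∑' l : List ℕ,
            (if l.length = k then ENNReal.ofReal (Tabs l ω) else 0) :=
      funext fun ω => tsum_congr fun k => hreprAbs k ω
    rw [hrwtot]
    apply Measurable.ennreal_tsum
    intro k
    apply Measurable.ennreal_tsum
    intro l
    by_cases hlen : l.length = k
    · simp only [if_pos hlen]; exact (hTabs_meas l).ennreal_ofReal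
    · simp only [if_neg hlen]; exact measurable_const
  have haefin : ∀ᵐ ω, (∑' k : ℕ, ∑ i ∈ A k ω,
      ENNReal.ofReal (|Pi i ω| * |(NQ i ω).2|)) < ⊤ := ae_lt_top hmtot hfin1.ne
  -- bound for each level sum by the absolute level sum
  have hSbound : ∀ (k : ℕ) (ω : Ω), ((‖∑ i ∈ A k ω, Pi i ω * (NQ i ω).2‖₊ : ℝ≥0∞))
      ≤ ∑ i ∈ A k ω, ENNReal.ofReal (|Pi i ω| * |(NQ i ω).2|) := by
    intro k ω
    rw [← enorm_eq_nnnorm, Real.enorm_eq_ofReal_abs]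
    calc ENNReal.ofReal (|∑ i ∈ A k ω, Pi i ω * (NQ i ω).2|)
        ≤ ENNReal.ofReal (∑ i ∈ A k ω, |Pi i ω * (NQ i ω).2|) :=
          ENNReal.ofReal_le_ofReal (Finset.abs_sum_le_sum_abs _ _)
      _ = ENNReal.ofReal (∑ i ∈ A k ω, |Pi i ω| * |(NQ i ω).2|) := by
          rw [Finset.sum_congr rfl fun i _ => abs_mul _ _]
      _ = ∑ i ∈ A k ω, ENNReal.ofReal (|Pi i ω| * |(NQ i ω).2|) :=
          ENNReal.ofReal_sum_of_nonneg fun i _ => mul_nonneg (abs_nonneg _) (abs_nonneg _)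
  -- measurability of the level sums
  have hSmeas : ∀ k : ℕ, Measurable (fun ω => ∑ i ∈ A k ω, Pi i ω * (NQ i ω).2) := by
    intro k
    have hposmeas : Measurable (fun ω =>
        (∑' l : List ℕ, ENNReal.ofReal (if l.length = k then Tsgn l ω else 0)).toReal) := by
      apply Measurable.ennreal_toReal
      apply Measurable.ennreal_tsum
      intro l
      by_cases hlen : l.length = k
      · simp only [if_pos hlen]; exact (hTsgn_meas l).ennreal_ofReal
      · simp only [if_neg hlen]; exact measurable_const
    have hnegmeas : Measurable (fun ω =>
        (∑' l : List ℕ, ENNReal.ofReal (-(if l.length = k then Tsgn l ω else 0))).toReal) := by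
      apply Measurable.ennreal_toReal
      apply Measurable.ennreal_tsum
      intro l
      by_cases hlen : l.length = k
      · simp only [if_pos hlen]; exact (hTsgn_meas l).neg.ennreal_ofReal
      · simp only [if_neg hlen, neg_zero]; exact measurable_const
    have hrepr2 : (fun ω => ∑ i ∈ A k ω, Pi i ω * (NQ i ω).2)
        = fun ω => (∑' l : List ℕ, ENNReal.ofReal (if l.length = k then Tsgn l ω else 0)).toReal
          - (∑' l : List ℕ, ENNReal.ofReal (-(if l.length = k then Tsgn l ω else 0))).toReal := by
      funext ω
      have hzero : ∀ l ∉ A k ω, (if l.length = k then Tsgn l ω else 0) = 0 := by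
        intro l hl
        by_cases hlen : l.length = k
        · rw [if_pos hlen]
          have hχ0 : χ l ω = 0 := by
            rcases hχ01 l ω with h0 | h1
            · exact h0
            · exact absurd ((hmem k l ω).2 ⟨hlen, h1⟩) hl
          rw [hTsgndef]; simp [hχ0]
        · rw [if_neg hlen]
      have hfp : (∑' l : List ℕ, ENNReal.ofReal (if l.length = k then Tsgn l ω else 0)) ≠ ⊤ := by
        rw [tsum_eq_sum (s := A k ω) (fun l hl => by rw [hzero l hl, ENNReal.ofReal_zero])]
        exact (ENNReal.sum_lt_top.2 fun l _ => ENNReal.ofReal_lt_top).ne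
      have hfn : (∑' l : List ℕ,
          ENNReal.ofReal (-(if l.length = k then Tsgn l ω else 0))) ≠ ⊤ := by
        rw [tsum_eq_sum (s := A k ω)
          (fun l hl => by rw [hzero l hl, neg_zero, ENNReal.ofReal_zero])]
        exact (ENNReal.sum_lt_top.2 fun l _ => ENNReal.ofReal_lt_top).ne
      rw [hreprSgn k ω]
      exact (aux_tsum_real _ hfp hfn).2
    rw [hrepr2]
    exact hposmeas.sub hnegmeas
  -- the lintegral of the norms of the level sums is summable
  have hSlintSum : (∑' k : ℕ, ∫⁻ ω,
      ((‖∑ i ∈ A k ω, Pi i ω * (NQ i ω).2‖₊ : ℝ≥0∞))) ≠ ⊤ := by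
    apply ne_top_of_le_ne_top (b := ∑' k : ℕ, ρ ^ k * ENNReal.ofReal qE)
    · rw [ENNReal.tsum_mul_right, ENNReal.tsum_geometric]
      exact (ENNReal.mul_lt_top (ENNReal.inv_lt_top.2 (tsub_pos_iff_lt.2 hρ1))
        ENNReal.ofReal_lt_top).ne
    · apply ENNReal.tsum_le_tsum
      intro k
      exact (lintegral_mono (hSbound k)).trans_eq (hlevelAbs k)
  -- value of the integral of R
  have hr_abs : |nI * cI| < 1 := by
    have h1 : |cI| ≤ bE := by
      rw [hcIdef, hbEdef]
      have := norm_integral_le_integral_norm (μ := (ℙ : Measure Ω)) (Cw [0])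
      simpa [Real.norm_eq_abs] using this
    calc |nI * cI| = nI * |cI| := by rw [abs_mul, abs_of_nonneg hnI_nonneg]
      _ ≤ nI * bE := mul_le_mul_of_nonneg_left h1 hnI_nonneg
      _ < 1 := hlt
  have hintR : ∫ ω, R ω = qI / (1 - nI * cI) := by
    have hRfun : R = fun ω => ∑' k : ℕ, ∑ i ∈ A k ω, Pi i ω * (NQ i ω).2 := funext hR
    rw [hRfun, integral_tsum (fun k => (hSmeas k).aestronglyMeasurable) hSlintSum,
      tsum_congr hlevelSgn, tsum_mul_right, tsum_geometric_of_abs_lt_one hr_abs,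
      inv_mul_eq_div]
  -- integrability of R
  have hMRmeas : Measurable (fun ω =>
      (∑' k : ℕ, ENNReal.ofReal (∑ i ∈ A k ω, Pi i ω * (NQ i ω).2)).toReal
        - (∑' k : ℕ, ENNReal.ofReal (-(∑ i ∈ A k ω, Pi i ω * (NQ i ω).2))).toReal) := by
    apply Measurable.sub
    · exact (Measurable.ennreal_tsum fun k => (hSmeas k).ennreal_ofReal).ennreal_toReal
    · exact (Measurable.ennreal_tsum fun k => (hSmeas k).neg.ennreal_ofReal).ennreal_toReal
  have hnode_le : ∀ (k : ℕ) (ω : Ω), ENNReal.ofReal (∑ i ∈ A k ω, Pi i ω * (NQ i ω).2)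
      ≤ ∑ i ∈ A k ω, ENNReal.ofReal (|Pi i ω| * |(NQ i ω).2|) := by
    intro k ω
    refine le_trans (ENNReal.ofReal_le_ofReal (le_abs_self _)) ?_
    rw [← Real.enorm_eq_ofReal_abs, enorm_eq_nnnorm]
    exact hSbound k ω
  have hnode_le' : ∀ (k : ℕ) (ω : Ω), ENNReal.ofReal (-(∑ i ∈ A k ω, Pi i ω * (NQ i ω).2))
      ≤ ∑ i ∈ A k ω, ENNReal.ofReal (|Pi i ω| * |(NQ i ω).2|) := by
    intro k ω
    refine le_trans (ENNReal.ofReal_le_ofReal (neg_le_abs _)) ?_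
    rw [← Real.enorm_eq_ofReal_abs, enorm_eq_nnnorm]
    exact hSbound k ω
  have haeR : R =ᵐ[(ℙ : Measure Ω)] (fun ω =>
      (∑' k : ℕ, ENNReal.ofReal (∑ i ∈ A k ω, Pi i ω * (NQ i ω).2)).toReal
        - (∑' k : ℕ, ENNReal.ofReal (-(∑ i ∈ A k ω, Pi i ω * (NQ i ω).2))).toReal) := by
    filter_upwards [haefin] with ω hω
    have h1 : (∑' k : ℕ, ENNReal.ofReal (∑ i ∈ A k ω, Pi i ω * (NQ i ω).2)) ≠ ⊤ :=
      ne_top_of_le_ne_top hω.ne (ENNReal.tsum_le_tsum fun k => hnode_le k ω)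
    have h2 : (∑' k : ℕ, ENNReal.ofReal (-(∑ i ∈ A k ω, Pi i ω * (NQ i ω).2))) ≠ ⊤ :=
      ne_top_of_le_ne_top hω.ne (ENNReal.tsum_le_tsum fun k => hnode_le' k ω)
    rw [hR ω]
    exact (aux_tsum_real _ h1 h2).2
  have hRaesm : AEStronglyMeasurable R (ℙ : Measure Ω) :=
    ⟨_, hMRmeas.stronglyMeasurable, haeR⟩
  have hRfi : HasFiniteIntegral R (ℙ : Measure Ω) := by
    show (∫⁻ ω, ((‖R ω‖₊ : ℝ≥0∞))) < ⊤
    have hbound : ∀ᵐ ω, ((‖R ω‖₊ : ℝ≥0∞))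
        ≤ ∑' k : ℕ, ∑ i ∈ A k ω, ENNReal.ofReal (|Pi i ω| * |(NQ i ω).2|) := by
      filter_upwards [haefin] with ω hω
      have habs_ne : (∑' k : ℕ,
          ENNReal.ofReal (|∑ i ∈ A k ω, Pi i ω * (NQ i ω).2|)) ≠ ⊤ := by
        refine ne_top_of_le_ne_top hω.ne (ENNReal.tsum_le_tsum fun k => ?_)
        rw [← Real.enorm_eq_ofReal_abs, enorm_eq_nnnorm]
        exact hSbound k ω
      have hsummabs : Summable (fun k : ℕ => |∑ i ∈ A k ω, Pi i ω * (NQ i ω).2|) := by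
        have h2 := ENNReal.summable_toReal habs_ne
        have heq : (fun k : ℕ =>
            (ENNReal.ofReal (|∑ i ∈ A k ω, Pi i ω * (NQ i ω).2|)).toReal)
            = fun k : ℕ => |∑ i ∈ A k ω, Pi i ω * (NQ i ω).2| :=
          funext fun k => ENNReal.toReal_ofReal (abs_nonneg _)
        rwa [heq] at h2
      rw [hR ω, ← enorm_eq_nnnorm, Real.enorm_eq_ofReal_abs]
      calc ENNReal.ofReal (|∑' k : ℕ, ∑ i ∈ A k ω, Pi i ω * (NQ i ω).2|)
          ≤ ENNReal.ofReal (∑' k : ℕ, |∑ i ∈ A k ω, Pi i ω * (NQ i ω).2|) := by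
            apply ENNReal.ofReal_le_ofReal
            have := norm_tsum_le_tsum_norm (f := fun k : ℕ =>
              ∑ i ∈ A k ω, Pi i ω * (NQ i ω).2) (by simpa [Real.norm_eq_abs] using hsummabs)
            simpa [Real.norm_eq_abs] using this
        _ = ∑' k : ℕ, ENNReal.ofReal (|∑ i ∈ A k ω, Pi i ω * (NQ i ω).2|) :=
            ENNReal.ofReal_tsum_of_nonneg (fun k => abs_nonneg _) hsummabs
        _ ≤ ∑' k : ℕ, ∑ i ∈ A k ω, ENNReal.ofReal (|Pi i ω| * |(NQ i ω).2|) := by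
            refine ENNReal.tsum_le_tsum fun k => ?_
            rw [← Real.enorm_eq_ofReal_abs, enorm_eq_nnnorm]
            exact hSbound k ω
    exact lt_of_le_of_lt (lintegral_mono_ae hbound) hfin1
  -- a.e. summability
  have hsum_ae : ∀ᵐ ω, Summable fun k : ℕ => ∑ i ∈ A k ω, |Pi i ω * (NQ i ω).2| := by
    filter_upwards [haefin] with ω hω
    have hofReal : ∀ k : ℕ, ENNReal.ofReal (∑ i ∈ A k ω, |Pi i ω| * |(NQ i ω).2|)
        = ∑ i ∈ A k ω, ENNReal.ofReal (|Pi i ω| * |(NQ i ω).2|) :=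
      fun k => ENNReal.ofReal_sum_of_nonneg fun i _ =>
        mul_nonneg (abs_nonneg _) (abs_nonneg _)
    have hne : (∑' k : ℕ,
        ENNReal.ofReal (∑ i ∈ A k ω, |Pi i ω| * |(NQ i ω).2|)) ≠ ⊤ := by
      rw [tsum_congr hofReal]; exact hω.ne
    have h2 := ENNReal.summable_toReal hne
    have heq : (fun k : ℕ =>
        (ENNReal.ofReal (∑ i ∈ A k ω, |Pi i ω| * |(NQ i ω).2|)).toReal)
        = fun k : ℕ => ∑ i ∈ A k ω, |Pi i ω| * |(NQ i ω).2| :=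
      funext fun k => ENNReal.toReal_ofReal
        (Finset.sum_nonneg fun i _ => mul_nonneg (abs_nonneg _) (abs_nonneg _))
    rw [heq] at h2
    have heq2 : (fun k : ℕ => ∑ i ∈ A k ω, |Pi i ω * (NQ i ω).2|)
        = fun k : ℕ => ∑ i ∈ A k ω, |Pi i ω| * |(NQ i ω).2| :=
      funext fun k => Finset.sum_congr rfl fun i _ => abs_mul _ _
    rw [heq2]
    exact h2
  exact ⟨hfin1, hsum_ae, ⟨hRaesm, hRfi⟩, hintR⟩

end
end

section
/- Let X be a real random variable with E[|X|^{1+κ}] < ∞ for some κ > 0, let μ = E[X] and G(t) = P(|X| ≤ t). Then for every t > 0 with G(t) > 0, |E[X · 1(|X| ≤ t)] / G(t) − μ| ≤ (E[|X|^{1+κ}] / G(t)) · ((1+κ)/κ + |μ|/t) · t^{−κ}. -/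
open MeasureTheory ProbabilityTheory

/-- truncated-mean bound. For a real random variable `X` with
`E[|X|^{1+κ}] < ∞`, `μ = E[X]` and `G(t) = P(|X| ≤ t)`, for every `t > 0` with
`G(t) > 0`:
`|E[X·1(|X|≤t)]/G(t) − μ| ≤ (E[|X|^{1+κ}]/G(t))((1+κ)/κ + |μ|/t) t^{−κ}`. -/
theorem stmt_14 {Ω : Type*} [MeasureSpace Ω] [IsProbabilityMeasure (ℙ : Measure Ω)]
    (X : Ω → ℝ) (hX : Measurable X)
    (κ : ℝ) (hκ : 0 < κ)
    (hmom : Integrable (fun ω => |X ω| ^ (1 + κ)))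
    (μ : ℝ) (hμ : μ = ∫ ω, X ω)
    (t : ℝ) (ht : 0 < t)
    (hG : 0 < (ℙ {ω | |X ω| ≤ t}).toReal) :
    |(∫ ω, if |X ω| ≤ t then X ω else 0) / (ℙ {ω | |X ω| ≤ t}).toReal - μ|
      ≤ ((∫ ω, |X ω| ^ (1 + κ)) / (ℙ {ω | |X ω| ≤ t}).toReal)
          * ((1 + κ) / κ + |μ| / t) * t ^ (-κ) := by
  have hAm : MeasurableSet {ω | |X ω| ≤ t} := measurableSet_le hX.abs measurable_const
  set A : Set Ω := {ω | |X ω| ≤ t} with hAdef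
  set G : ℝ := (ℙ A).toReal with hGdef
  set M : ℝ := ∫ ω, |X ω| ^ (1 + κ) with hMdef
  have hMnonneg : 0 ≤ M := integral_nonneg fun ω => Real.rpow_nonneg (abs_nonneg _) _
  have htκ : (0:ℝ) ≤ t ^ (-κ) := Real.rpow_nonneg ht.le _
  -- X is integrable
  have hXint : Integrable X := by
    refine ((integrable_const (1:ℝ)).add hmom).mono' hX.aestronglyMeasurable ?_
    filter_upwards with ω
    have key : |X ω| ≤ 1 + |X ω| ^ (1 + κ) := by
      rcases le_or_gt (|X ω|) 1 with h | h
      · have h0 : (0:ℝ) ≤ |X ω| ^ (1 + κ) := Real.rpow_nonneg (abs_nonneg _) _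
        linarith
      · calc |X ω| = |X ω| ^ (1:ℝ) := (Real.rpow_one _).symm
          _ ≤ |X ω| ^ (1 + κ) := Real.rpow_le_rpow_of_exponent_le h.le (by linarith)
          _ ≤ 1 + |X ω| ^ (1 + κ) := by linarith
    simpa [Real.norm_eq_abs] using key
  -- indicator rewriting
  have hind : (∫ ω, if |X ω| ≤ t then X ω else 0) = ∫ ω in A, X ω := by
    rw [← integral_indicator hAm]
    congr 1
  -- bound on ∫ over complement
  have hbound1 : ∀ ω ∈ Aᶜ, |X ω| ≤ t ^ (-κ) * |X ω| ^ (1 + κ) := by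
    intro ω hω
    have hω' : t < |X ω| := not_le.mp hω
    have hx : 0 < |X ω| := ht.trans hω'
    have h1 : |X ω| ^ (1 + κ) = |X ω| * |X ω| ^ κ := by
      rw [Real.rpow_add hx, Real.rpow_one]
    have h2 : t ^ κ ≤ |X ω| ^ κ := Real.rpow_le_rpow ht.le hω'.le hκ.le
    have h3 : t ^ (-κ) = (t ^ κ)⁻¹ := Real.rpow_neg ht.le κ
    have h4 : (0:ℝ) < t ^ κ := Real.rpow_pos_of_pos ht κ
    rw [h1, h3]
    calc |X ω| = |X ω| * ((t ^ κ)⁻¹ * t ^ κ) := by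
          rw [inv_mul_cancel₀ h4.ne', mul_one]
      _ ≤ |X ω| * ((t ^ κ)⁻¹ * |X ω| ^ κ) := by
          apply mul_le_mul_of_nonneg_left _ (abs_nonneg _)
          exact mul_le_mul_of_nonneg_left h2 (inv_nonneg.mpr h4.le)
      _ = (t ^ κ)⁻¹ * (|X ω| * |X ω| ^ κ) := by ring
  have hJ : |∫ ω in Aᶜ, X ω| ≤ t ^ (-κ) * M := by
    calc |∫ ω in Aᶜ, X ω| ≤ ∫ ω in Aᶜ, |X ω| := by
          simpa [Real.norm_eq_abs] using
            norm_integral_le_integral_norm (μ := (ℙ : Measure Ω).restrict Aᶜ) X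
      _ ≤ ∫ ω in Aᶜ, t ^ (-κ) * |X ω| ^ (1 + κ) := by
          refine setIntegral_mono_on hXint.abs.integrableOn
            ((hmom.const_mul _).integrableOn) hAm.compl hbound1
      _ ≤ ∫ ω, t ^ (-κ) * |X ω| ^ (1 + κ) := by
          refine setIntegral_le_integral (hmom.const_mul _) ?_
          filter_upwards with ω
          exact mul_nonneg htκ (Real.rpow_nonneg (abs_nonneg _) _)
      _ = t ^ (-κ) * M := by rw [hMdef, integral_const_mul]
  -- bound on measure of complement
  have hGc : (ℙ Aᶜ).toReal ≤ t ^ (-(1 + κ)) * M := by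
    have h0 : (ℙ Aᶜ).toReal = ∫ ω in Aᶜ, (1:ℝ) := by simp [measureReal_def]
    rw [h0]
    calc ∫ ω in Aᶜ, (1:ℝ) ≤ ∫ ω in Aᶜ, t ^ (-(1 + κ)) * |X ω| ^ (1 + κ) := by
          refine setIntegral_mono_on ((integrableOn_const_iff).mpr (Or.inr (measure_lt_top _ _)))
            ((hmom.const_mul _).integrableOn) hAm.compl ?_
          intro ω hω
          have hω' : t < |X ω| := not_le.mp hω
          have h2 : t ^ (1 + κ) ≤ |X ω| ^ (1 + κ) :=
            Real.rpow_le_rpow ht.le hω'.le (by linarith)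
          have h3 : t ^ (-(1 + κ)) = (t ^ (1 + κ))⁻¹ := Real.rpow_neg ht.le _
          have h4 : (0:ℝ) < t ^ (1 + κ) := Real.rpow_pos_of_pos ht _
          rw [h3]
          calc (1:ℝ) = (t ^ (1 + κ))⁻¹ * t ^ (1 + κ) := by
                rw [inv_mul_cancel₀ h4.ne']
            _ ≤ (t ^ (1 + κ))⁻¹ * |X ω| ^ (1 + κ) :=
                mul_le_mul_of_nonneg_left h2 (inv_nonneg.mpr h4.le)
      _ ≤ ∫ ω, t ^ (-(1 + κ)) * |X ω| ^ (1 + κ) := by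
          refine setIntegral_le_integral (hmom.const_mul _) ?_
          filter_upwards with ω
          exact mul_nonneg (Real.rpow_nonneg ht.le _) (Real.rpow_nonneg (abs_nonneg _) _)
      _ = t ^ (-(1 + κ)) * M := by rw [hMdef, integral_const_mul]
  -- decomposition
  have hdecomp : (∫ ω in A, X ω) + ∫ ω in Aᶜ, X ω = μ := by
    rw [hμ]; exact integral_add_compl hAm hXint
  have hGsum : G + (ℙ Aᶜ).toReal = 1 := by
    rw [hGdef, ← ENNReal.toReal_add (measure_ne_top _ _) (measure_ne_top _ _),
      measure_add_measure_compl hAm, measure_univ, ENNReal.toReal_one]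
  -- key numerator bound
  have hkey : |(∫ ω, if |X ω| ≤ t then X ω else 0) - μ * G|
      ≤ M * ((1 + κ) / κ + |μ| / t) * t ^ (-κ) := by
    have heq : (∫ ω, if |X ω| ≤ t then X ω else 0) - μ * G
        = μ * (ℙ Aᶜ).toReal - ∫ ω in Aᶜ, X ω := by
      rw [hind]
      have : (∫ ω in A, X ω) = μ - ∫ ω in Aᶜ, X ω := by linarith
      have hGc' : (ℙ Aᶜ).toReal = 1 - G := by linarith
      rw [this, hGc']; ring
    rw [heq]
    have h1 : |μ * (ℙ Aᶜ).toReal - ∫ ω in Aᶜ, X ω|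
        ≤ |μ| * (ℙ Aᶜ).toReal + |∫ ω in Aᶜ, X ω| := by
      calc |μ * (ℙ Aᶜ).toReal - ∫ ω in Aᶜ, X ω|
          ≤ |μ * (ℙ Aᶜ).toReal| + |∫ ω in Aᶜ, X ω| := abs_sub _ _
        _ = |μ| * (ℙ Aᶜ).toReal + |∫ ω in Aᶜ, X ω| := by
            rw [abs_mul, abs_of_nonneg ENNReal.toReal_nonneg]
    have h2 : |μ| * (ℙ Aᶜ).toReal ≤ |μ| * (t ^ (-(1 + κ)) * M) :=
      mul_le_mul_of_nonneg_left hGc (abs_nonneg _)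
    have h3 : t ^ (-(1 + κ)) = t⁻¹ * t ^ (-κ) := by
      rw [show -(1 + κ) = (-1) + (-κ) by ring, Real.rpow_add ht, Real.rpow_neg_one]
    have h4 : (1:ℝ) ≤ (1 + κ) / κ := (one_le_div hκ).mpr (by linarith)
    have h5 : (0:ℝ) ≤ |μ| / t := div_nonneg (abs_nonneg _) ht.le
    have h6 : |μ| * (t ^ (-(1 + κ)) * M) = |μ| / t * M * t ^ (-κ) := by
      rw [h3]; field_simp
    nlinarith [mul_nonneg hMnonneg htκ]
  -- conclude
  have hG' : (0:ℝ) < G := hG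
  have hlhs : (∫ ω, if |X ω| ≤ t then X ω else 0) / G - μ
      = ((∫ ω, if |X ω| ≤ t then X ω else 0) - μ * G) / G := by
    field_simp
  rw [hlhs, abs_div, abs_of_pos hG', show (M / G) * ((1 + κ) / κ + |μ| / t) * t ^ (-κ)
      = M * ((1 + κ) / κ + |μ| / t) * t ^ (-κ) / G by ring]
  gcongr
end
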